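/- arXiv:2212.13797 — 2 statements merged into one kernel-verified Lean document; each statement's English description precedes it below -/
import Mathlib

section
/- Every condition that is strongly (M,ℙ)-semigeneric is (M,ℙ)-semigeneric. -/
noncomputable section

namespace CcPaper

/-! ### First-order logic over the membership relation -/

/-- First-order formulas in the language of set theory with `n` free variables. -/
inductive Fml : ℕ → Type
  | mem : ∀ {n}, Fin n → Fin n → Fml n
  | eq : ∀ {n}, Fin n → Fin n → Fml n
  | not : ∀ {n}, Fml n → Fml n
  | and : ∀ {n}, Fml n → Fml n → Fml n
  | ex : ∀ {n}, Fml (n + 1) → Fml n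

/-- Satisfaction of a formula in a class `D` of ZF-sets, quantifiers relativized to `D`. -/
def Sat (D : Set ZFSet.{0}) : ∀ {n}, Fml n → (Fin n → ZFSet.{0}) → Prop
  | _, .mem i j, v => v i ∈ v j
  | _, .eq i j, v => v i = v j
  | _, .not φ, v => ¬ Sat D φ v
  | _, .and φ ψ, v => Sat D φ v ∧ Sat D ψ v
  | _, .ex φ, v => ∃ x ∈ D, Sat D φ (Fin.snoc v x)

/-- `M` is an elementary substructure of the class `H` (w.r.t. `∈`). -/
def ElemSub (M H : Set ZFSet.{0}) : Prop :=
  M ⊆ H ∧ ∀ {n : ℕ} (φ : Fml n) (v : Fin n → ZFSet.{0}), (∀ i, v i ∈ M) →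
    (Sat M φ v ↔ Sat H φ v)

/-- A transitive class. -/
def TransClass (H : Set ZFSet.{0}) : Prop := ∀ x ∈ H, ∀ y ∈ x, y ∈ H

/-! ### Ordinals, ω₁, functions, hulls -/

/-- `x` is a (von Neumann) ordinal. -/
def IsOrd (x : ZFSet.{0}) : Prop := x.IsTransitive ∧ ∀ y ∈ x, ZFSet.IsTransitive y

/-- `o` is the first uncountable ordinal. -/
def IsOmega1 (o : ZFSet.{0}) : Prop :=
  IsOrd o ∧ ¬ o.toSet.Countable ∧ ∀ β ∈ o.toSet, β.toSet.Countable

/-- `f` is a (set-)function, i.e. a single-valued set of Kuratowski pairs. -/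
def IsFun (f : ZFSet.{0}) : Prop :=
  (∀ z ∈ f, ∃ a b, z = ZFSet.pair a b) ∧
    ∀ a b b', ZFSet.pair a b ∈ f → ZFSet.pair a b' ∈ f → b = b'

/-- `x` belongs to the domain of `f`. -/
def domMem (f x : ZFSet.{0}) : Prop := ∃ y, ZFSet.pair x y ∈ f

/-- `f` is a function with domain `d`. -/
def FunOn (f d : ZFSet.{0}) : Prop := IsFun f ∧ ∀ x, domMem f x ↔ x ∈ d

/-- `Hull M x = { f(x) : f ∈ M, x ∈ dom f }`. -/
def Hull (M : Set ZFSet.{0}) (x : ZFSet.{0}) : Set ZFSet.{0} :=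
  {y | ∃ f ∈ M, IsFun f ∧ ZFSet.pair x y ∈ f}

/-- `x ∥_{ω₁} M` : `Hull M x` and `M` contain the same elements of `ω₁`. -/
def ParallelO (ω1 x : ZFSet.{0}) (M : Set ZFSet.{0}) : Prop :=
  ∀ z ∈ ω1.toSet, (z ∈ Hull M x ↔ z ∈ M)

/-- `δ` is the ordinal `M ∩ ω₁`, i.e. `δ(M)`. -/
def DeltaIs (ω1 : ZFSet.{0}) (M : Set ZFSet.{0}) (δ : ZFSet.{0}) : Prop :=
  IsOrd δ ∧ ∀ z : ZFSet.{0}, z ∈ δ ↔ (z ∈ ω1.toSet ∧ z ∈ M)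

/-! ### H_θ, cardinality, regularity -/

/-- `y` lies in the transitive closure of `x`. -/
def InTC (y x : ZFSet.{0}) : Prop :=
  ∃ n : ℕ, ∃ c : Fin (n + 1) → ZFSet.{0}, c 0 ∈ x ∧
    (∀ i : Fin n, c i.succ ∈ c i.castSucc) ∧ c (Fin.last n) = y

/-- `x` has cardinality (strictly) less than the ordinal `θ`. -/
def CardLt (x θ : ZFSet.{0}) : Prop :=
  ∃ β ∈ θ.toSet, ∃ f : x.toSet → β.toSet, Function.Injective f

/-- `x` has cardinality at most that of `κ`. -/
def CardLe (x κ : ZFSet.{0}) : Prop := ∃ f : x.toSet → κ.toSet, Function.Injective f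

/-- The class `H_θ` of sets hereditarily of cardinality `< θ`. -/
def HClass (θ : ZFSet.{0}) : Set ZFSet.{0} :=
  {x | CardLt x θ ∧ ∀ y, InTC y x → CardLt y θ}

/-- `θ` is a regular uncountable cardinal. -/
def IsRegular (θ : ZFSet.{0}) : Prop :=
  IsOrd θ ∧ ZFSet.omega ∈ θ ∧ ¬ θ.toSet.Countable ∧
    ∀ β ∈ θ.toSet, ∀ f : ZFSet.{0} → ZFSet.{0}, (∀ x ∈ β.toSet, f x ∈ θ) →
      ∃ γ ∈ θ.toSet, ∀ x ∈ β.toSet, f x ∈ γ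

/-- `x ≪ θ` : the double powerset of `x` belongs to `H_θ`. -/
def Gg (x θ : ZFSet.{0}) : Prop := ZFSet.powerset (ZFSet.powerset x) ∈ HClass θ

/-! ### ZFC⁻ and ZFC• -/

/-- `r` is a wellordering of `a`, with "every nonempty subset" relativized to `H`. -/
def IsWellOrderOn (H : Set ZFSet.{0}) (r a : ZFSet.{0}) : Prop :=
  (∀ z ∈ r, ∃ x y, x ∈ a ∧ y ∈ a ∧ z = ZFSet.pair x y) ∧
  (∀ x ∈ a.toSet, ∀ y ∈ a.toSet, x ≠ y →
    (ZFSet.pair x y ∈ r ↔ ZFSet.pair y x ∉ r)) ∧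
  (∀ x y z : ZFSet.{0}, ZFSet.pair x y ∈ r → ZFSet.pair y z ∈ r → ZFSet.pair x z ∈ r) ∧
  (∀ b : ZFSet.{0}, b ∈ H → b ⊆ a → (∃ x, x ∈ b) →
    ∃ x, x ∈ b ∧ ∀ y, y ∈ b → y ≠ x → ZFSet.pair x y ∈ r)

/-- `H` is a model of ZFC⁻ (= ZF minus powerset, with collection and wellordering),
stated semantically for a class `H`. -/
def ModelsZFCminus (H : Set ZFSet.{0}) : Prop :=
  (∅ : ZFSet.{0}) ∈ H ∧
  ZFSet.omega ∈ H ∧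
  (∀ a ∈ H, ∀ b ∈ H, ZFSet.pair a b ∈ H) ∧
  (∀ a ∈ H, ZFSet.sUnion a ∈ H) ∧
  -- separation scheme
  (∀ (n : ℕ) (φ : Fml (n + 1)) (v : Fin n → ZFSet.{0}), (∀ i, v i ∈ H) → ∀ a ∈ H,
    ∃ b ∈ H, ∀ x : ZFSet.{0}, x ∈ b ↔ (x ∈ a ∧ Sat H φ (Fin.snoc v x))) ∧
  -- collection scheme
  (∀ (n : ℕ) (φ : Fml (n + 2)) (v : Fin n → ZFSet.{0}), (∀ i, v i ∈ H) → ∀ a ∈ H,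
    (∀ x ∈ a.toSet, ∃ y ∈ H, Sat H φ (Fin.snoc (Fin.snoc v x) y)) →
    ∃ b ∈ H, ∀ x ∈ a.toSet, ∃ y, y ∈ b ∧ Sat H φ (Fin.snoc (Fin.snoc v x) y)) ∧
  -- wellordering axiom
  (∀ a ∈ H, ∃ r, r ∈ H ∧ IsWellOrderOn H r a)

/-! ### Clubs, stationarity, antichains, selfgenericity, precipitousness -/

/-- `C ⊆ ω₁` is club in `ω₁`. -/
def IsClub (ω1 C : ZFSet.{0}) : Prop :=
  C ⊆ ω1 ∧ (∀ α ∈ ω1.toSet, ∃ β, β ∈ C ∧ α ∈ β) ∧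
    ∀ δ ∈ ω1.toSet, (∃ β, β ∈ δ) →
      (∀ α ∈ δ.toSet, ∃ β, β ∈ C ∧ α ∈ β ∧ β ∈ δ) → δ ∈ C

/-- `S` is a stationary subset of `ω₁`, where only clubs belonging to the class `H`
are considered (`H = Set.univ` gives genuine stationarity). -/
def StatIn (H : Set ZFSet.{0}) (ω1 S : ZFSet.{0}) : Prop :=
  S ⊆ ω1 ∧ ∀ C : ZFSet.{0}, C ∈ H → IsClub ω1 C → ∃ x, x ∈ S ∧ x ∈ C

/-- Genuine stationarity in `ω₁`. -/
abbrev Stat (ω1 S : ZFSet.{0}) : Prop := StatIn Set.univ ω1 S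

/-- `A` is a maximal antichain in `NS_{ω₁}⁺` (relative to the class `H`). -/
def MaxAC (H : Set ZFSet.{0}) (ω1 A : ZFSet.{0}) : Prop :=
  (∀ S ∈ A.toSet, StatIn H ω1 S) ∧
  (∀ S ∈ A.toSet, ∀ T ∈ A.toSet, S ≠ T → ¬ StatIn H ω1 (S ∩ T)) ∧
  (∀ S : ZFSet.{0}, S ∈ H → StatIn H ω1 S → ∃ T ∈ A.toSet, StatIn H ω1 (S ∩ T))

/-- A countable `M` is selfgeneric (relative to the ambient class `H`). -/
def SelfGenericIn (H : Set ZFSet.{0}) (ω1 : ZFSet.{0}) (M : Set ZFSet.{0}) : Prop :=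
  ∀ A : ZFSet.{0}, A ∈ M → MaxAC H ω1 A →
    ∃ S, S ∈ A ∧ S ∈ M ∧ ∃ δ, DeltaIs ω1 M δ ∧ δ ∈ S

/-- `W` is a maximal antichain of stationary subsets of `S` (relative to `H`). -/
def MaxACBelow (H : Set ZFSet.{0}) (ω1 S W : ZFSet.{0}) : Prop :=
  (∀ T ∈ W.toSet, T ⊆ S ∧ StatIn H ω1 T) ∧
  (∀ T ∈ W.toSet, ∀ T' ∈ W.toSet, T ≠ T' → ¬ StatIn H ω1 (T ∩ T')) ∧
  (∀ T : ZFSet.{0}, T ∈ H → T ⊆ S → StatIn H ω1 T → ∃ T' ∈ W.toSet, StatIn H ω1 (T ∩ T'))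

/-- Jech's combinatorial characterization of precipitousness of `NS_{ω₁}`,
relativized to the class `H`. -/
def PrecipitousIn (H : Set ZFSet.{0}) (ω1 : ZFSet.{0}) : Prop :=
  ∀ S : ZFSet.{0}, S ∈ H → StatIn H ω1 S →
    ∀ W : ℕ → ZFSet.{0}, (∀ n, W n ∈ H) → (∀ n, MaxACBelow H ω1 S (W n)) →
      (∀ n, ∀ T ∈ (W (n + 1)).toSet, ∃ T' ∈ (W n).toSet, T ⊆ T') →
      ∃ T : ℕ → ZFSet.{0}, (∀ n, T n ∈ (W n).toSet) ∧ (∀ n, T (n + 1) ⊆ T n) ∧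
        ∃ x, ∀ n, x ∈ T n

/-- ZFC• : ZFC⁻ + the double powerset of ω₁ exists + NS_{ω₁} is precipitous,
for a class `H`. -/
def PowIn (H : Set ZFSet.{0}) (a p : ZFSet.{0}) : Prop := p ∈ H ∧ ∀ x, x ∈ p ↔ (x ∈ H ∧ x ⊆ a)

/-- The ordinal `δ` is `ω₁` as computed inside the class `H`. -/
def IsOmega1Of (H : Set ZFSet.{0}) (δ : ZFSet.{0}) : Prop :=
  δ ∈ H ∧ IsOrd δ ∧
  (∀ β ∈ δ.toSet, ∃ f, f ∈ H ∧ IsFun f ∧ (∀ x, domMem f x ↔ x ∈ ZFSet.omega) ∧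
    ∀ y ∈ β.toSet, ∃ n, ZFSet.pair n y ∈ f) ∧
  ¬ ∃ f, f ∈ H ∧ IsFun f ∧ (∀ x, domMem f x ↔ x ∈ ZFSet.omega) ∧
    ∀ y ∈ δ.toSet, ∃ n, ZFSet.pair n y ∈ f

def ModelsZFCbullet (H : Set ZFSet.{0}) : Prop :=
  ModelsZFCminus H ∧ ∃ δ, IsOmega1Of H δ ∧
    (∃ p q, PowIn H δ p ∧ PowIn H p q) ∧ PrecipitousIn H δ

/-! ### Stationarity in `[H_θ]^ω` and projective stationarity -/

def ClosedUnder (M : Set ZFSet.{0}) (F : List ZFSet.{0} → ZFSet.{0}) : Prop :=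
  ∀ l : List ZFSet.{0}, (∀ x ∈ l, x ∈ M) → F l ∈ M

/-- `X` is a stationary family of countable subsets of the class `A`. -/
def StatPow (A : Set ZFSet.{0}) (X : Set (Set ZFSet.{0})) : Prop :=
  ∀ F : List ZFSet.{0} → ZFSet.{0}, (∀ l, F l ∈ A) →
    ∃ M ∈ X, M.Countable ∧ M ⊆ A ∧ ClosedUnder M F

/-- `X` contains a club of countable subsets of the class `A`. -/
def ClubPow (A : Set ZFSet.{0}) (X : Set (Set ZFSet.{0})) : Prop :=
  ∃ F : List ZFSet.{0} → ZFSet.{0}, (∀ l, F l ∈ A) ∧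
    ∀ M : Set ZFSet.{0}, M.Countable → M ⊆ A → ClosedUnder M F → M ∈ X

/-- `X` is a projective stationary family of countable subsets of `A`. -/
def ProjStatPow (ω1 : ZFSet.{0}) (A : Set ZFSet.{0}) (X : Set (Set ZFSet.{0})) : Prop :=
  ∀ S : ZFSet.{0}, Stat ω1 S →
    StatPow A {M | M ∈ X ∧ ∃ δ, DeltaIs ω1 M δ ∧ δ ∈ S}

/-! ### Forcing notions (as ZF-sets) -/

/-- `p ≤ q` in the order coded by the set of pairs `le`. -/
def pLe (le p q : ZFSet.{0}) : Prop := ZFSet.pair p q ∈ le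

def IsForcing (P le : ZFSet.{0}) : Prop :=
  (∀ z ∈ le, ∃ p q, p ∈ P ∧ q ∈ P ∧ z = ZFSet.pair p q) ∧
  (∀ p ∈ P.toSet, pLe le p p) ∧
  (∀ p q r : ZFSet.{0}, pLe le p q → pLe le q r → pLe le p r)

/-- Compatibility of conditions. -/
def CompatC (P le p q : ZFSet.{0}) : Prop := ∃ r, r ∈ P ∧ pLe le r p ∧ pLe le r q

/-- `A` is a maximal antichain in the forcing `(P, le)`. -/
def PMaxAC (P le A : ZFSet.{0}) : Prop :=
  A ⊆ P ∧ (∀ p ∈ A.toSet, ∀ q ∈ A.toSet, p ≠ q → ¬ CompatC P le p q) ∧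
    ∀ p ∈ P.toSet, ∃ q ∈ A.toSet, CompatC P le p q

/-- `p'` is an `(M,ℙ)`-semigeneric condition. -/
def Semigeneric (ω1 P le : ZFSet.{0}) (M : Set ZFSet.{0}) (p' : ZFSet.{0}) : Prop :=
  ∀ q, q ∈ P → pLe le q p' → ∀ A : ZFSet.{0}, A ∈ M → PMaxAC P le A →
    ∃ r, r ∈ A ∧ CompatC P le r q ∧ ParallelO ω1 r M

/-- `p'` is a strongly `(M,ℙ)`-semigeneric condition. -/
def StronglySemigeneric (ω1 P le : ZFSet.{0}) (M : Set ZFSet.{0}) (p' : ZFSet.{0}) : Prop :=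
  ∀ q, q ∈ P → pLe le q p' → ∃ t, t ∈ P ∧ ParallelO ω1 t M ∧
    ∀ r, r ∈ Hull M t → r ∈ P → pLe le r t → CompatC P le r q

/-- `ℙ` is semiproper with respect to `M`. -/
def SemiproperWrt (ω1 P le : ZFSet.{0}) (M : Set ZFSet.{0}) : Prop :=
  ∀ p, p ∈ P → p ∈ M → ∃ p', p' ∈ P ∧ pLe le p' p ∧ Semigeneric ω1 P le M p'

/-- `ℙ` is strongly semiproper with respect to `M`. -/
def StronglySemiproperWrt (ω1 P le : ZFSet.{0}) (M : Set ZFSet.{0}) : Prop :=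
  ∀ p, p ∈ P → p ∈ M → ∃ p', p' ∈ P ∧ pLe le p' p ∧ StronglySemigeneric ω1 P le M p'

/-- `p'` is a strongly `(M,ℙ)`-generic condition (Mitchell). -/
def StronglyGeneric (P le : ZFSet.{0}) (M : Set ZFSet.{0}) (p' : ZFSet.{0}) : Prop :=
  ∀ q, q ∈ P → pLe le q p' → ∃ t, t ∈ P ∧ t ∈ M ∧
    ∀ r, r ∈ M → r ∈ P → pLe le r t → CompatC P le r q

def StronglyProperWrt (P le : ZFSet.{0}) (M : Set ZFSet.{0}) : Prop :=
  ∀ p, p ∈ P → p ∈ M → ∃ p', p' ∈ P ∧ pLe le p' p ∧ StronglyGeneric P le M p'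

/-- `ℙ` is strongly proper. -/
def StronglyProper (P le : ZFSet.{0}) : Prop :=
  ∀ θ : ZFSet.{0}, IsRegular θ → Gg (ZFSet.pair P le) θ →
    ClubPow (HClass θ)
      {M | M.Countable ∧ ElemSub M (HClass θ) ∧ StronglyProperWrt P le M}

/-- `ℙ` is strongly ssp. -/
def StronglySSP (ω1 P le : ZFSet.{0}) : Prop :=
  ∀ θ : ZFSet.{0}, IsRegular θ → Gg (ZFSet.pair P le) θ →
    ProjStatPow ω1 (HClass θ)
      {M | M.Countable ∧ ElemSub M (HClass θ) ∧ StronglySemiproperWrt ω1 P le M}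

/-! ### The games -/

/-- Rules of a game in which the moves of P2 grow a model via `Hull`. -/
structure GameRules : Type 2 where
  legal1 : Set ZFSet.{0} → ZFSet.{0} → Prop
  legal2 : Set ZFSet.{0} → ZFSet.{0} → ZFSet.{0} → Prop

/-- The models built from P2's moves `b`. -/
def Mods (M0 : Set ZFSet.{0}) (b : ℕ → ZFSet.{0}) : ℕ → Set ZFSet
  | 0 => M0
  | n + 1 => Hull (Mods M0 b n) (b n)

/-- A strategy for P2: sees the past rounds and P1's current move. -/
abbrev Strat2 : Type 1 := List (ZFSet.{0} × ZFSet.{0}) → ZFSet.{0} → ZFSet.{0}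

/-- A strategy for P1: sees the past rounds. -/
abbrev Strat1 : Type 1 := List (ZFSet.{0} × ZFSet.{0}) → ZFSet.{0}

def hist2 (σ : Strat2) (a : ℕ → ZFSet.{0}) : ℕ → List (ZFSet × ZFSet.{0})
  | 0 => []
  | n + 1 => hist2 σ a n ++ [(a n, σ (hist2 σ a n) (a n))]

/-- P2's responses when following `σ` against the P1-moves `a`. -/
def resp (σ : Strat2) (a : ℕ → ZFSet.{0}) (n : ℕ) : ZFSet.{0} := σ (hist2 σ a n) (a n)

/-- `σ` is a winning strategy for P2 (the Constructor): as long as P1 has played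
legally, P2's answers are legal. -/
def P2Wins (G : GameRules) (M0 : Set ZFSet.{0}) (σ : Strat2) : Prop :=
  ∀ a : ℕ → ZFSet.{0}, ∀ n : ℕ,
    (∀ k, k ≤ n → G.legal1 (Mods M0 (resp σ a) k) (a k)) →
    G.legal2 (Mods M0 (resp σ a) n) (a n) (resp σ a n)

def hist1 (τ : Strat1) (b : ℕ → ZFSet.{0}) : ℕ → List (ZFSet × ZFSet.{0})
  | 0 => []
  | n + 1 => hist1 τ b n ++ [(τ (hist1 τ b n), b n)]

def move1 (τ : Strat1) (b : ℕ → ZFSet.{0}) (n : ℕ) : ZFSet.{0} := τ (hist1 τ b n)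

/-- `τ` is a winning strategy for P1 (the Challenger): P1 always moves legally
(as long as P2 has), and eventually P2's answer is illegal. -/
def P1Wins (G : GameRules) (M0 : Set ZFSet.{0}) (τ : Strat1) : Prop :=
  ∀ b : ℕ → ZFSet.{0},
    (∀ n, (∀ k, k < n → G.legal2 (Mods M0 b k) (move1 τ b k) (b k)) →
      G.legal1 (Mods M0 b n) (move1 τ b n)) ∧
    ∃ n, (∀ k, k < n → G.legal2 (Mods M0 b k) (move1 τ b k) (b k)) ∧
      ¬ G.legal2 (Mods M0 b n) (move1 τ b n) (b n)

/-- The antichain catching game `G^cat_M` (antichains relative to the class `H`). -/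
def catRules (H : Set ZFSet.{0}) (ω1 : ZFSet.{0}) : GameRules where
  legal1 M A := A ∈ M ∧ MaxAC H ω1 A
  legal2 M A S := S ∈ A ∧ (∃ δ, DeltaIs ω1 M δ ∧ δ ∈ S) ∧ ParallelO ω1 S M

/-- The capturing game `G^cap_M(X)`. -/
def capRules (ω1 : ZFSet.{0}) (X : Set ZFSet.{0}) : GameRules where
  legal1 _ x := x ∈ X
  legal2 M x f := IsFun f ∧ (∀ y, domMem f y ↔ y ∈ ω1) ∧
    (∀ a b, ZFSet.pair a b ∈ f → b ∈ X) ∧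
    (∃ δ, DeltaIs ω1 M δ ∧ ZFSet.pair δ x ∈ f) ∧ ParallelO ω1 f M

/-- The catching-capturing game `G^{c-c}_M(X)`; P1's moves are tagged pairs. -/
def ccRules (H : Set ZFSet.{0}) (ω1 : ZFSet.{0}) (X : Set ZFSet.{0}) : GameRules where
  legal1 M m := (∃ A, m = ZFSet.pair ∅ A ∧ (catRules H ω1).legal1 M A) ∨
    (∃ x, m = ZFSet.pair {∅} x ∧ x ∈ X)
  legal2 M m r := (∃ A, m = ZFSet.pair ∅ A ∧ (catRules H ω1).legal2 M A r) ∨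
    (∃ x, m = ZFSet.pair {∅} x ∧ (capRules ω1 X).legal2 M x r)

end CcPaper
namespace CcPaper
section Aux

variable {θ : ZFSet.{0}} {D : Set ZFSet.{0}}

/-! ### Transitive closure lemmas -/

lemma inTC_of_mem {y x : ZFSet.{0}} (h : y ∈ x) : InTC y x :=
  ⟨0, fun _ => y, h, fun i => i.elim0, rfl⟩

lemma inTC_cons {z y x : ZFSet.{0}} (h : InTC z y) (hy : y ∈ x) : InTC z x := by
  obtain ⟨n, c, h0, hl, he⟩ := h
  refine ⟨n + 1, Fin.cons y c, by simpa using hy, ?_, ?_⟩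
  · intro i
    refine Fin.cases ?_ (fun j => ?_) i
    · simpa using h0
    · have e : ((j.succ : Fin (n+1)).castSucc : Fin (n + 2)) = (j.castSucc).succ := by
        ext; simp
      rw [e, Fin.cons_succ, Fin.cons_succ]
      exact hl j
  · have e : (Fin.last (n+1)) = (Fin.last n).succ := by simp
    rw [e, Fin.cons_succ]
    exact he

lemma inTC_step {z x : ZFSet.{0}} (h : InTC z x) : z ∈ x ∨ ∃ y, y ∈ x ∧ InTC z y := by
  obtain ⟨n, c, h0, hl, he⟩ := h
  cases n with
  | zero =>
    left
    have : Fin.last 0 = (0 : Fin 1) := rfl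
    rw [this] at he
    rwa [← he]
  | succ m =>
    right
    refine ⟨c 0, h0, m, fun i => c i.succ, by simpa using hl 0, fun i => ?_, ?_⟩
    · show c (i.succ).succ ∈ c ((i.castSucc).succ)
      have e : ((i.castSucc : Fin (m+1)).succ : Fin (m + 2)) = (i.succ).castSucc := by
        ext; simp
      rw [e]
      exact hl i.succ
    · show c (Fin.last m).succ = z
      have e : ((Fin.last m).succ : Fin (m+2)) = Fin.last (m+1) := by simp
      rw [e]
      exact he

/-! ### HClass lemmas -/

lemma memH_trans {x y : ZFSet.{0}} (hx : x ∈ HClass θ) (hy : y ∈ x) : y ∈ HClass θ :=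
  ⟨hx.2 y (inTC_of_mem hy), fun z hz => hx.2 z (inTC_cons hz hy)⟩

lemma hclass_trans : TransClass (HClass θ) := fun _ hx _ hy => memH_trans hx hy

lemma memH_of_small {x : ZFSet.{0}} (hsub : ∀ y ∈ x, y ∈ HClass θ) (hc : CardLt x θ) :
    x ∈ HClass θ := by
  refine ⟨hc, fun z hz => ?_⟩
  rcases inTC_step hz with h | ⟨y, hy, hzy⟩
  · exact (hsub z h).1
  · exact (hsub y hy).2 z hzy

lemma cardLt_of_inj {x y : ZFSet.{0}} (f : x.toSet → y.toSet) (hf : Function.Injective f)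
    (hy : CardLt y θ) : CardLt x θ := by
  obtain ⟨β, hβ, g, hg⟩ := hy
  exact ⟨β, hβ, g ∘ f, hg.comp hf⟩

lemma cardLt_pair_set (hθω : ZFSet.omega ∈ θ) (a b : ZFSet.{0}) :
    CardLt ({a, b} : ZFSet.{0}) θ := by
  classical
  have h0 : (∅ : ZFSet.{0}) ∈ ZFSet.omega := ZFSet.omega_zero
  have h1 : (insert ∅ ∅ : ZFSet.{0}) ∈ ZFSet.omega := ZFSet.omega_succ h0
  refine ⟨ZFSet.omega, hθω, fun w =>
    if (w : ZFSet.{0}) = a then ⟨∅, h0⟩ else ⟨insert ∅ ∅, h1⟩, ?_⟩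
  intro w w' hww'
  have hne : (∅ : ZFSet.{0}) ≠ insert ∅ ∅ := by
    intro hcon
    have hmm : (∅ : ZFSet.{0}) ∈ insert ∅ ∅ := ZFSet.mem_insert ∅ ∅
    rw [← hcon] at hmm
    exact ZFSet.notMem_empty ∅ hmm
  have memb : ∀ u : (({a, b} : ZFSet.{0}).toSet), (u : ZFSet.{0}) ≠ a → (u : ZFSet.{0}) = b := by
    intro u hu
    rcases ZFSet.mem_pair.1 u.2 with h | h
    · exact absurd h hu
    · exact h
  dsimp only at hww'
  by_cases hw : (w : ZFSet.{0}) = a <;> by_cases hw' : (w' : ZFSet.{0}) = a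
  · exact Subtype.ext (hw.trans hw'.symm)
  · rw [if_pos hw, if_neg hw'] at hww'
    exact absurd (congrArg Subtype.val hww') hne
  · rw [if_neg hw, if_pos hw'] at hww'
    exact absurd (congrArg Subtype.val hww').symm hne
  · exact Subtype.ext ((memb w hw).trans (memb w' hw').symm)

lemma memH_pair (hθω : ZFSet.omega ∈ θ) {a b : ZFSet.{0}}
    (ha : a ∈ HClass θ) (hb : b ∈ HClass θ) : ZFSet.pair a b ∈ HClass θ := by
  have hsa : ({a} : ZFSet.{0}) ∈ HClass θ := by
    refine memH_of_small (fun y hy => by rwa [ZFSet.mem_singleton.1 hy]) ?_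
    rw [← ZFSet.pair_eq_singleton]
    exact cardLt_pair_set hθω a a
  have hab : ({a, b} : ZFSet.{0}) ∈ HClass θ := by
    refine memH_of_small (fun y hy => ?_) (cardLt_pair_set hθω a b)
    rcases ZFSet.mem_pair.1 hy with rfl | rfl <;> assumption
  show ({{a}, {a, b}} : ZFSet.{0}) ∈ HClass θ
  refine memH_of_small (fun y hy => ?_) (cardLt_pair_set hθω _ _)
  rcases ZFSet.mem_pair.1 hy with rfl | rfl <;> assumption

lemma singleton_mem_pairZ (a b : ZFSet.{0}) : ({a} : ZFSet.{0}) ∈ ZFSet.pair a b :=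
  ZFSet.mem_insert _ _

lemma doubleton_mem_pairZ (a b : ZFSet.{0}) : ({a, b} : ZFSet.{0}) ∈ ZFSet.pair a b :=
  ZFSet.mem_insert_iff.2 (Or.inr (ZFSet.mem_singleton.2 rfl))

lemma pair_comp_memD (hD : TransClass D) {a b : ZFSet.{0}} (h : ZFSet.pair a b ∈ D) :
    a ∈ D ∧ b ∈ D := by
  have hsa : ({a} : ZFSet.{0}) ∈ D := hD _ h _ (singleton_mem_pairZ a b)
  have hab : ({a, b} : ZFSet.{0}) ∈ D := hD _ h _ (doubleton_mem_pairZ a b)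
  exact ⟨hD _ hsa _ (ZFSet.mem_singleton.2 rfl), hD _ hab _ (ZFSet.mem_pair.2 (Or.inr rfl))⟩

lemma pair_mem_comp_memD (hD : TransClass D) {a b c : ZFSet.{0}} (hc : c ∈ D)
    (h : ZFSet.pair a b ∈ c) : a ∈ D ∧ b ∈ D :=
  pair_comp_memD hD (hD _ hc _ h)

end Aux

section FmlAux

variable {D : Set ZFSet.{0}}

/-! ### Derived connectives -/

def fOr {n : ℕ} (φ ψ : Fml n) : Fml n := .not (.and (.not φ) (.not ψ))
def fImp {n : ℕ} (φ ψ : Fml n) : Fml n := .not (.and φ (.not ψ))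
def fAll {n : ℕ} (φ : Fml (n + 1)) : Fml n := .not (.ex (.not φ))

lemma sat_and {n} {φ ψ : Fml n} {v : Fin n → ZFSet.{0}} :
    Sat D (.and φ ψ) v ↔ Sat D φ v ∧ Sat D ψ v := Iff.rfl

lemma sat_mem {n} {i j : Fin n} {v : Fin n → ZFSet.{0}} :
    Sat D (.mem i j) v ↔ v i ∈ v j := Iff.rfl

lemma sat_eqF {n} {i j : Fin n} {v : Fin n → ZFSet.{0}} :
    Sat D (.eq i j) v ↔ v i = v j := Iff.rfl

lemma sat_ex {n} {φ : Fml (n + 1)} {v : Fin n → ZFSet.{0}} :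
    Sat D (.ex φ) v ↔ ∃ x ∈ D, Sat D φ (Fin.snoc v x) := Iff.rfl

lemma sat_not {n} {φ : Fml n} {v : Fin n → ZFSet.{0}} :
    Sat D (.not φ) v ↔ ¬ Sat D φ v := Iff.rfl

lemma sat_fOr {n} {φ ψ : Fml n} {v : Fin n → ZFSet.{0}} :
    Sat D (fOr φ ψ) v ↔ Sat D φ v ∨ Sat D ψ v := by
  rw [fOr, sat_not, sat_and, sat_not, sat_not]; tauto

lemma sat_fImp {n} {φ ψ : Fml n} {v : Fin n → ZFSet.{0}} :
    Sat D (fImp φ ψ) v ↔ (Sat D φ v → Sat D ψ v) := by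
  rw [fImp, sat_not, sat_and, sat_not]; tauto

lemma sat_fAll {n} {φ : Fml (n + 1)} {v : Fin n → ZFSet.{0}} :
    Sat D (fAll φ) v ↔ ∀ x ∈ D, Sat D φ (Fin.snoc v x) := by
  rw [fAll, sat_not]
  simp only [sat_ex, sat_not]
  push_neg
  rfl

/-! ### Pair-talk formulas -/

def isSingleton {n : ℕ} (a s : Fin n) : Fml n :=
  .and (.mem a s) (fAll (fImp (.mem (Fin.last n) s.castSucc) (.eq (Fin.last n) a.castSucc)))

lemma sat_isSingleton {n} {a s : Fin n} {v : Fin n → ZFSet.{0}} (hD : TransClass D)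
    (hs : v s ∈ D) : Sat D (isSingleton a s) v ↔ v s = {v a} := by
  rw [isSingleton, sat_and, sat_mem, sat_fAll]
  simp only [sat_fImp, sat_mem, sat_eqF, Fin.snoc_castSucc, Fin.snoc_last]
  constructor
  · rintro ⟨h1, h2⟩
    refine ZFSet.ext fun z => ⟨fun hz => ?_, fun hz => ?_⟩
    · rw [ZFSet.mem_singleton]
      exact h2 z (hD _ hs _ hz) hz
    · rw [ZFSet.mem_singleton.1 hz]; exact h1
  · intro hset
    refine ⟨?_, ?_⟩
    · rw [hset]; exact ZFSet.mem_singleton.2 rfl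
    · intro x _ hx
      rw [hset] at hx
      exact ZFSet.mem_singleton.1 hx

def isDoubleton {n : ℕ} (a b d : Fin n) : Fml n :=
  .and (.mem a d) (.and (.mem b d)
    (fAll (fImp (.mem (Fin.last n) d.castSucc)
      (fOr (.eq (Fin.last n) a.castSucc) (.eq (Fin.last n) b.castSucc)))))

lemma sat_isDoubleton {n} {a b d : Fin n} {v : Fin n → ZFSet.{0}} (hD : TransClass D)
    (hd : v d ∈ D) : Sat D (isDoubleton a b d) v ↔ v d = {v a, v b} := by
  rw [isDoubleton, sat_and, sat_mem, sat_and, sat_mem, sat_fAll]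
  simp only [sat_fImp, sat_fOr, sat_mem, sat_eqF, Fin.snoc_castSucc, Fin.snoc_last]
  constructor
  · rintro ⟨h1, h2, h3⟩
    refine ZFSet.ext fun z => ⟨fun hz => ?_, fun hz => ?_⟩
    · rw [ZFSet.mem_pair]
      exact h3 z (hD _ hd _ hz) hz
    · rcases ZFSet.mem_pair.1 hz with rfl | rfl <;> assumption
  · intro hset
    refine ⟨by rw [hset]; exact ZFSet.mem_pair.2 (Or.inl rfl),
            by rw [hset]; exact ZFSet.mem_pair.2 (Or.inr rfl), ?_⟩
    intro x _ hx
    rw [hset] at hx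
    exact ZFSet.mem_pair.1 hx

def eqPair {n : ℕ} (w a b : Fin n) : Fml n :=
  .ex (.ex (.and
    (isDoubleton ((Fin.last n).castSucc) (Fin.last (n + 1)) (w.castSucc.castSucc))
    (.and (isSingleton (a.castSucc.castSucc) ((Fin.last n).castSucc))
          (isDoubleton (a.castSucc.castSucc) (b.castSucc.castSucc) (Fin.last (n + 1))))))

lemma sat_eqPair {n} {w a b : Fin n} {v : Fin n → ZFSet.{0}} (hD : TransClass D)
    (hw : v w ∈ D) : Sat D (eqPair w a b) v ↔ v w = ZFSet.pair (v a) (v b) := by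
  rw [eqPair, sat_ex]
  simp only [sat_ex, sat_and]
  constructor
  · rintro ⟨s, hsD, d, hdD, h1, h2, h3⟩
    rw [sat_isDoubleton hD (by simpa using hw)] at h1
    rw [sat_isSingleton hD (by simpa using hsD)] at h2
    rw [sat_isDoubleton hD (by simpa using hdD)] at h3
    simp only [Fin.snoc_castSucc, Fin.snoc_last] at h1 h2 h3
    rw [h1, h2, h3]; rfl
  · intro heq
    have hsD : ({v a} : ZFSet.{0}) ∈ D :=
      hD _ hw _ (by rw [heq]; exact singleton_mem_pairZ _ _)
    have hdD : ({v a, v b} : ZFSet.{0}) ∈ D :=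
      hD _ hw _ (by rw [heq]; exact doubleton_mem_pairZ _ _)
    refine ⟨{v a}, hsD, {v a, v b}, hdD, ?_, ?_, ?_⟩
    · rw [sat_isDoubleton hD (by simpa using hw)]
      simpa [Fin.snoc_castSucc, Fin.snoc_last] using (heq.trans rfl : v w = {{v a}, {v a, v b}})
    · rw [sat_isSingleton hD (by simpa using hsD)]
      simp [Fin.snoc_castSucc, Fin.snoc_last]
    · rw [sat_isDoubleton hD (by simpa using hdD)]
      simp [Fin.snoc_castSucc, Fin.snoc_last]

def pairMemF {n : ℕ} (a b c : Fin n) : Fml n :=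
  .ex (.and (.mem (Fin.last n) c.castSucc) (eqPair (Fin.last n) a.castSucc b.castSucc))

lemma sat_pairMemF {n} {a b c : Fin n} {v : Fin n → ZFSet.{0}} (hD : TransClass D)
    (hc : v c ∈ D) : Sat D (pairMemF a b c) v ↔ ZFSet.pair (v a) (v b) ∈ v c := by
  rw [pairMemF, sat_ex]
  simp only [sat_and, sat_mem]
  constructor
  · rintro ⟨x, hxD, h1, h2⟩
    rw [sat_eqPair hD (by simpa using hxD)] at h2
    simp only [Fin.snoc_castSucc, Fin.snoc_last] at h1 h2
    rwa [← h2]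
  · intro hmem
    have hxD : ZFSet.pair (v a) (v b) ∈ D := hD _ hc _ hmem
    refine ⟨ZFSet.pair (v a) (v b), hxD, by simpa using hmem, ?_⟩
    rw [sat_eqPair hD (by simpa using hxD)]
    simp [Fin.snoc_castSucc, Fin.snoc_last]

def pairsOnly {n : ℕ} (c : Fin n) : Fml n :=
  fAll (fImp (.mem (Fin.last n) c.castSucc)
    (.ex (.ex (eqPair ((Fin.last n).castSucc.castSucc) ((Fin.last (n + 1)).castSucc)
      (Fin.last (n + 2))))))

lemma sat_pairsOnly {n} {c : Fin n} {v : Fin n → ZFSet.{0}} (hD : TransClass D)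
    (hc : v c ∈ D) : Sat D (pairsOnly c) v ↔ ∀ w ∈ v c, ∃ a b, w = ZFSet.pair a b := by
  rw [pairsOnly, sat_fAll]
  simp only [sat_fImp, sat_mem, sat_ex, Fin.snoc_castSucc, Fin.snoc_last]
  constructor
  · intro hs w hw
    have hwD : w ∈ D := hD _ hc _ hw
    obtain ⟨a, haD, b, hbD, h⟩ := hs w hwD hw
    rw [sat_eqPair hD (by simp [hwD])] at h
    simp only [Fin.snoc_castSucc, Fin.snoc_last] at h
    exact ⟨a, b, h⟩
  · intro hreal w hwD hw
    obtain ⟨a, b, hab⟩ := hreal w hw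
    obtain ⟨haD, hbD⟩ := pair_comp_memD hD (hab ▸ hwD)
    refine ⟨a, haD, b, hbD, ?_⟩
    rw [sat_eqPair hD (by simp [hwD])]
    simpa [Fin.snoc_castSucc, Fin.snoc_last] using hab

def svF {n : ℕ} (c : Fin n) : Fml n :=
  fAll (fAll (fAll (fImp
    (.and (pairMemF ((Fin.last n).castSucc.castSucc) ((Fin.last (n + 1)).castSucc)
            (c.castSucc.castSucc.castSucc))
          (pairMemF ((Fin.last n).castSucc.castSucc) (Fin.last (n + 2))
            (c.castSucc.castSucc.castSucc)))
    (.eq ((Fin.last (n + 1)).castSucc) (Fin.last (n + 2))))))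

lemma sat_svF {n} {c : Fin n} {v : Fin n → ZFSet.{0}} (hD : TransClass D)
    (hc : v c ∈ D) :
    Sat D (svF c) v ↔
      ∀ a b b', ZFSet.pair a b ∈ v c → ZFSet.pair a b' ∈ v c → b = b' := by
  rw [svF, sat_fAll]
  simp only [sat_fAll, sat_fImp, sat_and, sat_eqF]
  constructor
  · intro hs a b b' h1 h2
    obtain ⟨haD, hbD⟩ := pair_mem_comp_memD hD hc h1
    obtain ⟨_, hb'D⟩ := pair_mem_comp_memD hD hc h2
    have := hs a haD b hbD b' hb'D
    rw [sat_pairMemF hD (by simp [hc]), sat_pairMemF hD (by simp [hc])] at this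
    simp only [Fin.snoc_castSucc, Fin.snoc_last] at this
    exact this ⟨h1, h2⟩
  · intro hreal a haD b hbD b' hb'D hsat
    obtain ⟨h1, h2⟩ := hsat
    rw [sat_pairMemF hD (by simp [hc])] at h1
    rw [sat_pairMemF hD (by simp [hc])] at h2
    simp only [Fin.snoc_castSucc, Fin.snoc_last] at h1 h2 ⊢
    exact hreal a b b' h1 h2

def isFunF {n : ℕ} (c : Fin n) : Fml n := .and (pairsOnly c) (svF c)

lemma sat_isFunF {n} {c : Fin n} {v : Fin n → ZFSet.{0}} (hD : TransClass D)
    (hc : v c ∈ D) : Sat D (isFunF c) v ↔ IsFun (v c) := by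
  rw [isFunF, sat_and, sat_pairsOnly hD hc, sat_svF hD hc, IsFun]

end FmlAux

section MainAux

variable {D : Set ZFSet.{0}} {θ : ZFSet.{0}}

/-- de Bruijn-style index: variable number `k` in a context of size `k + 1 + m`. -/
def idx (k : ℕ) : (m : ℕ) → Fin (k + 1 + m)
  | 0 => Fin.last k
  | m + 1 => (idx k m).castSucc

lemma forall_mem_snoc {n : ℕ} {S : Set ZFSet.{0}} {v : Fin n → ZFSet.{0}} {x : ZFSet.{0}}
    (h : ∀ i, v i ∈ S) (hx : x ∈ S) :
    ∀ i, (Fin.snoc v x : Fin (n + 1) → ZFSet.{0}) i ∈ S := fun i =>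
  Fin.lastCases (by simpa using hx) (fun j => by simpa using h j) i

lemma forall_mem_elim0 {S : Set ZFSet.{0}} : ∀ i : Fin 0, (Fin.elim0 : Fin 0 → ZFSet.{0}) i ∈ S :=
  fun i => i.elim0

open Classical in
/-- First projection of a Kuratowski pair (via choice). -/
noncomputable def pFst (w : ZFSet.{0}) : ZFSet.{0} :=
  if h : ∃ a b, w = ZFSet.pair a b then h.choose else ∅

lemma pFst_pair (a b : ZFSet.{0}) : pFst (ZFSet.pair a b) = a := by
  have h : ∃ a' b', ZFSet.pair a b = ZFSet.pair a' b' := ⟨a, b, rfl⟩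
  rw [pFst, dif_pos h]
  obtain ⟨b', hb'⟩ := h.choose_spec
  exact ((ZFSet.pair_inj.1 hb').1).symm

lemma cardLt_of_keys {x s : ZFSet.{0}} (hs : CardLt s θ) (K : ZFSet.{0} → ZFSet.{0})
    (hK : ∀ w ∈ x, K w ∈ s) (hinj : ∀ w ∈ x, ∀ w' ∈ x, K w = K w' → w = w') :
    CardLt x θ := by
  refine cardLt_of_inj (fun w => ⟨K w, hK w w.2⟩) ?_ hs
  intro w w' hww'
  exact Subtype.ext (hinj _ w.2 _ w'.2 (congrArg Subtype.val hww'))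

lemma mem_sUnion₂_of_pair_mem {a b c : ZFSet.{0}} (h : ZFSet.pair a b ∈ c) :
    a ∈ ZFSet.sUnion (ZFSet.sUnion c) ∧ b ∈ ZFSet.sUnion (ZFSet.sUnion c) := by
  constructor
  · exact ZFSet.mem_sUnion.2 ⟨{a}, ZFSet.mem_sUnion.2 ⟨ZFSet.pair a b, h,
      singleton_mem_pairZ a b⟩, ZFSet.mem_singleton.2 rfl⟩
  · exact ZFSet.mem_sUnion.2 ⟨{a, b}, ZFSet.mem_sUnion.2 ⟨ZFSet.pair a b, h,
      doubleton_mem_pairZ a b⟩, ZFSet.mem_pair.2 (Or.inr rfl)⟩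

/-! ### The three formulas -/

/-- `ψ₂`, in context `[P, le, A, c₁, c₂]`: `c₁, c₂` are functions and for every `p ∈ P`
there are `r ∈ A`, `u ∈ P` with `u ≤ r`, `u ≤ p`, `c₁(p) = r`, `c₂(p) = u`. -/
def psi2 : Fml 5 :=
  .and (isFunF (idx 3 1)) (.and (isFunF (idx 4 0))
    (fAll (fImp (.mem (idx 5 0) (idx 0 5))
      (.ex (.ex (.and (.mem (idx 6 1) (idx 2 5))
        (.and (.mem (idx 7 0) (idx 0 7))
        (.and (pairMemF (idx 7 0) (idx 6 1) (idx 1 6))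
        (.and (pairMemF (idx 7 0) (idx 5 2) (idx 1 6))
        (.and (pairMemF (idx 5 2) (idx 6 1) (idx 3 4))
              (pairMemF (idx 5 2) (idx 7 0) (idx 4 3))))))))))))

lemma sat_psi2 (hD : TransClass D) {P le A c₁ c₂ : ZFSet.{0}}
    (hP : P ∈ D) (hle : le ∈ D) (hA : A ∈ D) (hc₁ : c₁ ∈ D) (hc₂ : c₂ ∈ D) :
    Sat D psi2
      (Fin.snoc (Fin.snoc (Fin.snoc (Fin.snoc (Fin.snoc Fin.elim0 P) le) A) c₁) c₂) ↔
    (IsFun c₁ ∧ IsFun c₂ ∧ ∀ p ∈ D, p ∈ P → ∃ r u,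
      r ∈ A ∧ u ∈ P ∧ ZFSet.pair u r ∈ le ∧ ZFSet.pair u p ∈ le ∧
      ZFSet.pair p r ∈ c₁ ∧ ZFSet.pair p u ∈ c₂) := by
  set v5 := (Fin.snoc (Fin.snoc (Fin.snoc (Fin.snoc (Fin.snoc Fin.elim0 P) le) A) c₁) c₂ :
    Fin 5 → ZFSet.{0}) with hv5
  unfold psi2
  rw [sat_and, sat_and, sat_isFunF hD (show v5 (idx 3 1) ∈ D from hc₁),
    sat_isFunF hD (show v5 (idx 4 0) ∈ D from hc₂), sat_fAll]
  refine and_congr Iff.rfl (and_congr Iff.rfl ?_)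
  refine forall_congr' fun p => forall_congr' fun hpD => ?_
  rw [sat_fImp]
  refine (imp_congr Iff.rfl ?_ : _ ↔ (p ∈ P → _))
  rw [sat_ex]
  constructor
  · rintro ⟨r, hrD, u, huD, h1, h2, h3, h4, h5, h6⟩
    rw [sat_pairMemF hD (show _ ∈ D from hle)] at h3 h4
    rw [sat_pairMemF hD (show _ ∈ D from hc₁)] at h5
    rw [sat_pairMemF hD (show _ ∈ D from hc₂)] at h6
    exact ⟨r, u, h1, h2, h3, h4, h5, h6⟩
  · rintro ⟨r, u, h1, h2, h3, h4, h5, h6⟩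
    refine ⟨r, hD _ hA _ h1, ?_⟩
    rw [sat_ex]
    refine ⟨u, hD _ hP _ h2, ?_⟩
    refine ⟨h1, h2, ?_, ?_, ?_, ?_⟩
    · rw [sat_pairMemF hD (show _ ∈ D from hle)]; exact h3
    · rw [sat_pairMemF hD (show _ ∈ D from hle)]; exact h4
    · rw [sat_pairMemF hD (show _ ∈ D from hc₁)]; exact h5
    · rw [sat_pairMemF hD (show _ ∈ D from hc₂)]; exact h6

/-- `ψ₃`, in context `[c₁, f, g]`: `g` is a function containing the composition of
`c₁` followed by `f`. -/
def psi3 : Fml 3 :=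
  .and (isFunF (idx 2 0))
    (fAll (fAll (fAll (fImp
      (.and (pairMemF (idx 3 2) (idx 4 1) (idx 0 5))
            (pairMemF (idx 4 1) (idx 5 0) (idx 1 4)))
      (pairMemF (idx 3 2) (idx 5 0) (idx 2 3))))))

lemma sat_psi3 (hD : TransClass D) {c₁ f g : ZFSet.{0}}
    (hc₁ : c₁ ∈ D) (hf : f ∈ D) (hg : g ∈ D) :
    Sat D psi3 (Fin.snoc (Fin.snoc (Fin.snoc Fin.elim0 c₁) f) g) ↔
    (IsFun g ∧ ∀ p y w, p ∈ D → y ∈ D → w ∈ D →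
      ZFSet.pair p y ∈ c₁ → ZFSet.pair y w ∈ f → ZFSet.pair p w ∈ g) := by
  unfold psi3
  rw [sat_and, sat_isFunF hD (show _ ∈ D from hg), sat_fAll]
  refine and_congr Iff.rfl ?_
  constructor
  · intro hs p y w hpD hyD hwD h1 h2
    have := hs p hpD
    rw [sat_fAll] at this
    have := this y hyD
    rw [sat_fAll] at this
    have := this w hwD
    rw [sat_fImp] at this
    have := this (by
      refine ⟨?_, ?_⟩
      · rw [sat_pairMemF hD (show _ ∈ D from hc₁)]; exact h1
      · rw [sat_pairMemF hD (show _ ∈ D from hf)]; exact h2)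
    rw [sat_pairMemF hD (show _ ∈ D from hg)] at this
    exact this
  · intro hreal p hpD
    rw [sat_fAll]
    intro y hyD
    rw [sat_fAll]
    intro w hwD
    rw [sat_fImp]
    rintro ⟨h1, h2⟩
    rw [sat_pairMemF hD (show _ ∈ D from hc₁)] at h1
    rw [sat_pairMemF hD (show _ ∈ D from hf)] at h2
    rw [sat_pairMemF hD (show _ ∈ D from hg)]
    exact hreal p y w hpD hyD hwD h1 h2

/-- `ψ₄`, in context `[A, z, f]`: `f` is a function with `f(s) = z` for all `s ∈ A`. -/
def psi4 : Fml 3 :=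
  .and (isFunF (idx 2 0))
    (fAll (fImp (.mem (idx 3 0) (idx 0 3)) (pairMemF (idx 3 0) (idx 1 2) (idx 2 1))))

lemma sat_psi4 (hD : TransClass D) {A z f : ZFSet.{0}}
    (hA : A ∈ D) (hz : z ∈ D) (hf : f ∈ D) :
    Sat D psi4 (Fin.snoc (Fin.snoc (Fin.snoc Fin.elim0 A) z) f) ↔
    (IsFun f ∧ ∀ s ∈ D, s ∈ A → ZFSet.pair s z ∈ f) := by
  unfold psi4
  rw [sat_and, sat_isFunF hD (show _ ∈ D from hf), sat_fAll]
  refine and_congr Iff.rfl ?_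
  constructor
  · intro hs s hsD hsA
    have := hs s hsD
    rw [sat_fImp] at this
    have := this hsA
    rw [sat_pairMemF hD (show _ ∈ D from hf)] at this
    exact this
  · intro hreal s hsD
    rw [sat_fImp]
    intro hsA
    rw [sat_pairMemF hD (show _ ∈ D from hf)]
    exact hreal s hsD hsA

end MainAux

/-- every strongly `(M,ℙ)`-semigeneric condition is `(M,ℙ)`-semigeneric. -/
theorem semigeneric_of_stronglySemigeneric
    (ω1 P le : ZFSet.{0}) (hω1 : IsOmega1 ω1) (hF : IsForcing P le)
    (θ : ZFSet.{0}) (hθ : IsRegular θ) (hPθ : ZFSet.pair P le ∈ HClass θ)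
    (M : Set ZFSet.{0}) (hMc : M.Countable) (hM : ElemSub M (HClass θ))
    (hPM : P ∈ M) (hleM : le ∈ M)
    (p' : ZFSet.{0}) (hp' : p' ∈ P)
    (h : StronglySemigeneric ω1 P le M p') :
    Semigeneric ω1 P le M p' := by
  classical
  intro q hqP hqle A hAM hAmax
  obtain ⟨t, htP, htPar, htComp⟩ := h q hqP hqle
  have hD : TransClass (HClass θ) := hclass_trans
  have hθω : ZFSet.omega ∈ θ := hθ.2.1
  have hMH : M ⊆ HClass θ := hM.1
  have hPH : P ∈ HClass θ :=
    memH_trans (memH_trans hPθ (singleton_mem_pairZ P le)) (ZFSet.mem_singleton.2 rfl)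
  have hleH : le ∈ HClass θ :=
    memH_trans (memH_trans hPθ (doubleton_mem_pairZ P le)) (ZFSet.mem_pair.2 (Or.inr rfl))
  have hAH : A ∈ HClass θ := hMH hAM
  have htH : t ∈ HClass θ := memH_trans hPH htP
  -- a selector for the maximal antichain A
  have hsel : ∀ p : ZFSet.{0}, ∃ r u : ZFSet.{0}, p ∈ P →
      r ∈ A ∧ u ∈ P ∧ ZFSet.pair u r ∈ le ∧ ZFSet.pair u p ∈ le := by
    intro p
    by_cases hp : p ∈ P
    · obtain ⟨r, hrA, w0, hw0P, hw0p, hw0r⟩ := hAmax.2.2 p hp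
      exact ⟨r, w0, fun _ => ⟨hrA, hw0P, hw0r, hw0p⟩⟩
    · exact ⟨∅, ∅, fun hcon => absurd hcon hp⟩
  choose Fr Fu hFru using hsel
  have hc1smem : ∀ w : ZFSet.{0}, w ∈ ZFSet.pairSep (fun a b => b = Fr a) P A ↔
      ∃ a ∈ P, ∃ b ∈ A, w = ZFSet.pair a b ∧ b = Fr a := fun w => ZFSet.mem_pairSep
  have hc2smem : ∀ w : ZFSet.{0}, w ∈ ZFSet.pairSep (fun a b => b = Fu a) P P ↔
      ∃ a ∈ P, ∃ b ∈ P, w = ZFSet.pair a b ∧ b = Fu a := fun w => ZFSet.mem_pairSep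
  set c1s := ZFSet.pairSep (fun a b => b = Fr a) P A with hc1sdef
  set c2s := ZFSet.pairSep (fun a b => b = Fu a) P P with hc2sdef
  have hc1sH : c1s ∈ HClass θ := by
    refine memH_of_small (fun y hy => ?_) ?_
    · obtain ⟨a, haP, b, hbA, rfl, _⟩ := (hc1smem y).1 hy
      exact memH_pair hθω (memH_trans hPH haP) (memH_trans hAH hbA)
    · refine cardLt_of_keys hPH.1 pFst (fun w hw => ?_) (fun w hw w' hw' hk => ?_)
      · obtain ⟨a, haP, b, hbA, rfl, _⟩ := (hc1smem w).1 hw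
        rw [pFst_pair]; exact haP
      · obtain ⟨a, haP, b, hbA, rfl, hb⟩ := (hc1smem w).1 hw
        obtain ⟨a', haP', b', hbA', rfl, hb'⟩ := (hc1smem w').1 hw'
        rw [pFst_pair, pFst_pair] at hk
        subst hk; rw [hb, hb']
  have hc2sH : c2s ∈ HClass θ := by
    refine memH_of_small (fun y hy => ?_) ?_
    · obtain ⟨a, haP, b, hbP, rfl, _⟩ := (hc2smem y).1 hy
      exact memH_pair hθω (memH_trans hPH haP) (memH_trans hPH hbP)
    · refine cardLt_of_keys hPH.1 pFst (fun w hw => ?_) (fun w hw w' hw' hk => ?_)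
      · obtain ⟨a, haP, b, hbP, rfl, _⟩ := (hc2smem w).1 hw
        rw [pFst_pair]; exact haP
      · obtain ⟨a, haP, b, hbP, rfl, hb⟩ := (hc2smem w).1 hw
        obtain ⟨a', haP', b', hbP', rfl, hb'⟩ := (hc2smem w').1 hw'
        rw [pFst_pair, pFst_pair] at hk
        subst hk; rw [hb, hb']
  have hc1sF : IsFun c1s := by
    constructor
    · intro z hz
      obtain ⟨a, _, b, _, rfl, _⟩ := (hc1smem z).1 hz
      exact ⟨a, b, rfl⟩
    · intro a b b' h1 h2
      obtain ⟨a1, _, b1, _, he1, hb1⟩ := (hc1smem _).1 h1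
      obtain ⟨a2, _, b2, _, he2, hb2⟩ := (hc1smem _).1 h2
      obtain ⟨rfl, rfl⟩ := ZFSet.pair_inj.1 he1
      obtain ⟨rfl, rfl⟩ := ZFSet.pair_inj.1 he2
      rw [hb1, hb2]
  have hc2sF : IsFun c2s := by
    constructor
    · intro z hz
      obtain ⟨a, _, b, _, rfl, _⟩ := (hc2smem z).1 hz
      exact ⟨a, b, rfl⟩
    · intro a b b' h1 h2
      obtain ⟨a1, _, b1, _, he1, hb1⟩ := (hc2smem _).1 h1
      obtain ⟨a2, _, b2, _, he2, hb2⟩ := (hc2smem _).1 h2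
      obtain ⟨rfl, rfl⟩ := ZFSet.pair_inj.1 he1
      obtain ⟨rfl, rfl⟩ := ZFSet.pair_inj.1 he2
      rw [hb1, hb2]
  have hmainW : ∀ p ∈ HClass θ, p ∈ P → ∃ r u, r ∈ A ∧ u ∈ P ∧
      ZFSet.pair u r ∈ le ∧ ZFSet.pair u p ∈ le ∧
      ZFSet.pair p r ∈ c1s ∧ ZFSet.pair p u ∈ c2s := by
    intro p _ hp
    obtain ⟨hrA, huP, hur, hup⟩ := hFru p hp
    refine ⟨Fr p, Fu p, hrA, huP, hur, hup, ?_, ?_⟩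
    · exact (hc1smem _).2 ⟨p, hp, Fr p, hrA, rfl, rfl⟩
    · exact (hc2smem _).2 ⟨p, hp, Fu p, huP, rfl, rfl⟩
  -- transfer through M
  have hv3 : ∀ i, (Fin.snoc (Fin.snoc (Fin.snoc Fin.elim0 P) le) A : Fin 3 → ZFSet.{0}) i ∈ M :=
    forall_mem_snoc (forall_mem_snoc (forall_mem_snoc forall_mem_elim0 hPM) hleM) hAM
  have satH2 : Sat (HClass θ) (.ex (.ex psi2))
      (Fin.snoc (Fin.snoc (Fin.snoc Fin.elim0 P) le) A) := by
    rw [sat_ex]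
    refine ⟨c1s, hc1sH, ?_⟩
    rw [sat_ex]
    refine ⟨c2s, hc2sH, ?_⟩
    exact (sat_psi2 hD hPH hleH hAH hc1sH hc2sH).2 ⟨hc1sF, hc2sF, hmainW⟩
  have satM2 := (hM.2 (.ex (.ex psi2)) _ hv3).mpr satH2
  rw [sat_ex] at satM2
  obtain ⟨c₁, hc₁M, satM2⟩ := satM2
  rw [sat_ex] at satM2
  obtain ⟨c₂, hc₂M, satM2⟩ := satM2
  have hc₁H : c₁ ∈ HClass θ := hMH hc₁M
  have hc₂H : c₂ ∈ HClass θ := hMH hc₂M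
  have satH2' := (hM.2 psi2 _ (forall_mem_snoc (forall_mem_snoc hv3 hc₁M) hc₂M)).mp satM2
  obtain ⟨hc₁F, hc₂F, hmain⟩ := (sat_psi2 hD hPH hleH hAH hc₁H hc₂H).1 satH2'
  obtain ⟨r, u, hrA, huP, hur, hut, htr, htu⟩ := hmain t htH htP
  -- compatibility
  have huHull : u ∈ Hull M t := ⟨c₂, hc₂M, hc₂F, htu⟩
  obtain ⟨w, hwP, hwu, hwq⟩ := htComp u huHull huP hut
  refine ⟨r, hrA, ⟨w, hwP, hF.2.2 w u r hwu hur, hwq⟩, ?_⟩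
  -- ParallelO
  intro z hz
  constructor
  · rintro ⟨f, hfM, hfF, hrz⟩
    have hfH : f ∈ HClass θ := hMH hfM
    have hzH : z ∈ HClass θ := (pair_mem_comp_memD hD hfH hrz).2
    have hg0mem : ∀ a b : ZFSet.{0},
        ZFSet.pair a b ∈ ZFSet.pairSep (fun a b => ∃ y, ZFSet.pair a y ∈ c₁ ∧ ZFSet.pair y b ∈ f)
          (ZFSet.sUnion (ZFSet.sUnion c₁)) (ZFSet.sUnion (ZFSet.sUnion f)) ↔
        ∃ y, ZFSet.pair a y ∈ c₁ ∧ ZFSet.pair y b ∈ f := by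
      intro a b
      constructor
      · intro hab
        obtain ⟨a', _, b', _, he, y, hy1, hy2⟩ := ZFSet.mem_pairSep.1 hab
        obtain ⟨rfl, rfl⟩ := ZFSet.pair_inj.1 he
        exact ⟨y, hy1, hy2⟩
      · rintro ⟨y, hy1, hy2⟩
        exact ZFSet.mem_pairSep.2 ⟨a, (mem_sUnion₂_of_pair_mem hy1).1, b,
          (mem_sUnion₂_of_pair_mem hy2).2, rfl, y, hy1, hy2⟩
    set g0 := ZFSet.pairSep (fun a b => ∃ y, ZFSet.pair a y ∈ c₁ ∧ ZFSet.pair y b ∈ f)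
        (ZFSet.sUnion (ZFSet.sUnion c₁)) (ZFSet.sUnion (ZFSet.sUnion f)) with hg0def
    have hg0F : IsFun g0 := by
      constructor
      · intro z' hz'
        obtain ⟨a, _, b, _, rfl, _⟩ := ZFSet.mem_pairSep.1 hz'
        exact ⟨a, b, rfl⟩
      · intro a b b' h1 h2
        obtain ⟨y, hy1, hy2⟩ := (hg0mem a b).1 h1
        obtain ⟨y', hy1', hy2'⟩ := (hg0mem a b').1 h2
        have : y = y' := hc₁F.2 a y y' hy1 hy1'
        subst this
        exact hfF.2 y b b' hy2 hy2'
    have hg0H : g0 ∈ HClass θ := by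
      refine memH_of_small (fun y hy => ?_) ?_
      · obtain ⟨a, _, b, _, rfl, y0, hy1, hy2⟩ := ZFSet.mem_pairSep.1 hy
        exact memH_pair hθω (pair_mem_comp_memD hD hc₁H hy1).1
          (pair_mem_comp_memD hD hfH hy2).2
      · refine cardLt_of_keys hc₁H.1
          (fun w => if h : ∃ y, ZFSet.pair (pFst w) y ∈ c₁
            then ZFSet.pair (pFst w) h.choose else ∅)
          (fun w hw => ?_) (fun w hw w' hw' hk => ?_)
        · obtain ⟨a, _, b, _, rfl, y0, hy1, hy2⟩ := ZFSet.mem_pairSep.1 hw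
          simp only [pFst_pair]
          rw [dif_pos (⟨y0, hy1⟩ : ∃ y, ZFSet.pair a y ∈ c₁)]
          exact (⟨y0, hy1⟩ : ∃ y, ZFSet.pair a y ∈ c₁).choose_spec
        · obtain ⟨a, _, b, _, rfl, y0, hy1, hy2⟩ := ZFSet.mem_pairSep.1 hw
          obtain ⟨a', _, b', _, rfl, y1, hy1', hy2'⟩ := ZFSet.mem_pairSep.1 hw'
          have e : ∃ y, ZFSet.pair a y ∈ c₁ := ⟨y0, hy1⟩
          have e' : ∃ y, ZFSet.pair a' y ∈ c₁ := ⟨y1, hy1'⟩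
          simp only [pFst_pair] at hk
          rw [dif_pos e, dif_pos e'] at hk
          obtain ⟨rfl, hch⟩ := ZFSet.pair_inj.1 hk
          have hy0 : y0 = e.choose := hc₁F.2 a y0 e.choose hy1 e.choose_spec
          have hy1e : y1 = e'.choose := hc₁F.2 a y1 e'.choose hy1' e'.choose_spec
          have : y0 = y1 := by rw [hy0, hy1e, hch]
          subst this
          have : b = b' := hfF.2 y0 b b' hy2 hy2'
          rw [this]
    have hv2 : ∀ i, (Fin.snoc (Fin.snoc Fin.elim0 c₁) f : Fin 2 → ZFSet.{0}) i ∈ M :=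
      forall_mem_snoc (forall_mem_snoc forall_mem_elim0 hc₁M) hfM
    have satH3 : Sat (HClass θ) (.ex psi3) (Fin.snoc (Fin.snoc Fin.elim0 c₁) f) := by
      rw [sat_ex]
      refine ⟨g0, hg0H, ?_⟩
      refine (sat_psi3 hD hc₁H hfH hg0H).2 ⟨hg0F, ?_⟩
      intro p y w' _ _ _ h1 h2
      exact (hg0mem p w').2 ⟨y, h1, h2⟩
    have satM3 := (hM.2 (.ex psi3) _ hv2).mpr satH3
    rw [sat_ex] at satM3
    obtain ⟨g, hgM, satM3⟩ := satM3
    obtain ⟨hgF, hgcl⟩ := (sat_psi3 hD hc₁H hfH (hMH hgM)).1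
      ((hM.2 psi3 _ (forall_mem_snoc hv2 hgM)).mp satM3)
    have htz : ZFSet.pair t z ∈ g :=
      hgcl t r z htH (memH_trans hAH hrA) hzH htr hrz
    exact (htPar z hz).1 ⟨g, hgM, hgF, htz⟩
  · intro hzM
    have hzH : z ∈ HClass θ := hMH hzM
    have hf4mem : ∀ s b : ZFSet.{0}, ZFSet.pair s b ∈ ZFSet.prod A {z} ↔ s ∈ A ∧ b = z := by
      intro s b
      rw [ZFSet.pair_mem_prod, ZFSet.mem_singleton]
    have hf4F : IsFun (ZFSet.prod A {z}) := by
      constructor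
      · intro z' hz'
        obtain ⟨a, _, b, _, rfl⟩ := ZFSet.mem_prod.1 hz'
        exact ⟨a, b, rfl⟩
      · intro a b b' h1 h2
        rw [((hf4mem a b).1 h1).2, ((hf4mem a b').1 h2).2]
    have hf4H : ZFSet.prod A {z} ∈ HClass θ := by
      refine memH_of_small (fun y hy => ?_) ?_
      · obtain ⟨a, haA, b, hb, rfl⟩ := ZFSet.mem_prod.1 hy
        rw [ZFSet.mem_singleton.1 hb]
        exact memH_pair hθω (memH_trans hAH haA) hzH
      · refine cardLt_of_keys hAH.1 pFst (fun w hw => ?_) (fun w hw w' hw' hk => ?_)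
        · obtain ⟨a, haA, b, hb, rfl⟩ := ZFSet.mem_prod.1 hw
          rw [pFst_pair]; exact haA
        · obtain ⟨a, haA, b, hb, rfl⟩ := ZFSet.mem_prod.1 hw
          obtain ⟨a', haA', b', hb', rfl⟩ := ZFSet.mem_prod.1 hw'
          rw [pFst_pair, pFst_pair] at hk
          subst hk
          rw [ZFSet.mem_singleton.1 hb, ZFSet.mem_singleton.1 hb']
    have hv2' : ∀ i, (Fin.snoc (Fin.snoc Fin.elim0 A) z : Fin 2 → ZFSet.{0}) i ∈ M :=
      forall_mem_snoc (forall_mem_snoc forall_mem_elim0 hAM) hzM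
    have satH4 : Sat (HClass θ) (.ex psi4) (Fin.snoc (Fin.snoc Fin.elim0 A) z) := by
      rw [sat_ex]
      refine ⟨ZFSet.prod A {z}, hf4H, ?_⟩
      refine (sat_psi4 hD hAH hzH hf4H).2 ⟨hf4F, ?_⟩
      intro s _ hsA
      exact (hf4mem s z).2 ⟨hsA, rfl⟩
    have satM4 := (hM.2 (.ex psi4) _ hv2').mpr satH4
    rw [sat_ex] at satM4
    obtain ⟨f', hf'M, satM4⟩ := satM4
    obtain ⟨hf'F, hf'cl⟩ := (sat_psi4 hD hAH hzH (hMH hf'M)).1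
      ((hM.2 psi4 _ (forall_mem_snoc hv2' hf'M)).mp satM4)
    exact ⟨f', hf'M, hf'F, hf'cl r (memH_trans hAH hrA) hrA⟩

end CcPaper
end
end

section
/- If ℙ is strongly stationary set preserving, then ℙ does not add any fresh function f : ω₁ → V, i.e. any function in the extension all of whose countable initial segments lie in the ground model already lies in the ground model. -/
noncomputable section

namespace CcPaper
/-- `F` is a `ℙ`-name for a function `ω₁ → V`: `pair r (pair α x) ∈ F` means
`r ⊩ Ḟ(α) = x`. -/
def FnName (ω1 P le F : ZFSet.{0}) : Prop :=
  (∀ z ∈ F, ∃ r α x, z = ZFSet.pair r (ZFSet.pair α x) ∧ r ∈ P ∧ α ∈ ω1) ∧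
  (∀ q ∈ P.toSet, ∀ α ∈ ω1.toSet, ∃ r x, r ∈ P ∧ pLe le r q ∧
    ZFSet.pair r (ZFSet.pair α x) ∈ F) ∧
  (∀ r α x r' x' : ZFSet.{0}, ZFSet.pair r (ZFSet.pair α x) ∈ F →
    ZFSet.pair r' (ZFSet.pair α x') ∈ F → CompatC P le r r' → x = x')

/-- `q ⊩ Ḟ(α) = x`. -/
def ForcesVal (P le F q α x : ZFSet.{0}) : Prop :=
  ∀ r, r ∈ P → pLe le r q → ∃ r', r' ∈ P ∧ pLe le r' r ∧
    ZFSet.pair r' (ZFSet.pair α x) ∈ F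

/-- `p` forces that every countable initial segment of `Ḟ` lies in the ground model. -/
def RestrInV (ω1 P le F p : ZFSet.{0}) : Prop :=
  ∀ q, q ∈ P → pLe le q p → ∀ α ∈ ω1.toSet, ∃ r g, r ∈ P ∧ pLe le r q ∧ IsFun g ∧
    (∀ y, domMem g y ↔ y ∈ α) ∧ ∀ β x : ZFSet.{0}, ZFSet.pair β x ∈ g →
      ForcesVal P le F r β x


/-! ### Auxiliary machinery (added for the proof) -/

section Aux

theorem ZFSet.mem_toSet (a u : ZFSet.{0}) : a ∈ u.toSet ↔ a ∈ u := Iff.rfl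

instance smallToSet (x : ZFSet.{0}) : Small.{0} x.toSet := ZFSet.small_coe x

open Cardinal in
/-- indexed `typein` with explicit instance, to avoid stuck elaboration -/
noncomputable def tyo (o : Ordinal.{0}) (i : o.ToType) : Ordinal.{0} :=
  @Ordinal.typein o.ToType (· < ·) isWellOrder_lt i

theorem tyo_lt {o : Ordinal.{0}} (i : o.ToType) : tyo o i < o :=
  Ordinal.typein_lt_self i

theorem tyo_surj {o ξ : Ordinal.{0}} (h : ξ < o) : ∃ i, tyo o i = ξ := by
  have h2 : ξ < @Ordinal.type o.ToType (· < ·) isWellOrder_lt := by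
    rwa [Ordinal.type_toType]
  exact @Ordinal.typein_surj o.ToType (· < ·) isWellOrder_lt ξ h2

/-- von Neumann ordinal as a ZFSet. -/
noncomputable def vn : Ordinal.{0} → ZFSet.{0} := fun o =>
  ZFSet.range.{0,0} fun i : o.ToType => vn (tyo o i)
termination_by o => o
decreasing_by exact tyo_lt i

theorem mem_vn {z : ZFSet.{0}} {o : Ordinal.{0}} : z ∈ vn o ↔ ∃ ξ < o, z = vn ξ := by
  rw [vn, ZFSet.mem_range]
  constructor
  · rintro ⟨i, rfl⟩
    exact ⟨_, tyo_lt i, rfl⟩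
  · rintro ⟨ξ, hξ, rfl⟩
    obtain ⟨i, hi⟩ := tyo_surj hξ
    exact ⟨i, by show vn (tyo o i) = vn ξ; rw [hi]⟩

theorem vn_mem_vn {a b : Ordinal.{0}} (h : a < b) : vn a ∈ vn b :=
  mem_vn.2 ⟨a, h, rfl⟩

theorem vn_injective : Function.Injective vn := by
  intro a b hab
  by_contra hne
  rcases lt_or_gt_of_ne hne with h | h
  · exact ZFSet.mem_irrefl (vn b) (by nth_rewrite 2 [← hab]; exact vn_mem_vn h)
  · exact ZFSet.mem_irrefl (vn a) (by nth_rewrite 2 [hab]; exact vn_mem_vn h)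

theorem vn_isTransitive (o : Ordinal.{0}) : (vn o).IsTransitive := by
  intro y hy z hz
  rcases mem_vn.1 hy with ⟨ξ, hξ, rfl⟩
  rcases mem_vn.1 hz with ⟨ζ, hζ, rfl⟩
  exact vn_mem_vn (hζ.trans hξ)

open Cardinal in
theorem mk_toSet_vn (o : Ordinal.{0}) : #(vn o).toSet = Cardinal.lift.{1} o.card := by
  have e : (vn o).toSet ≃ Set.Iio o := by
    refine Equiv.symm (Equiv.ofBijective (fun ξ => ⟨vn ξ.1, ?_⟩) ⟨?_, ?_⟩)
    · exact (ZFSet.mem_toSet _ _).2 (vn_mem_vn ξ.2)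
    · intro a b hab
      exact Subtype.ext (vn_injective (congrArg Subtype.val hab))
    · rintro ⟨z, hz⟩
      rcases mem_vn.1 ((ZFSet.mem_toSet _ _).1 hz) with ⟨ξ, hξ, rfl⟩
      exact ⟨⟨ξ, hξ⟩, rfl⟩
  rw [Cardinal.mk_congr e]
  exact Ordinal.mk_Iio_ordinal o

theorem vn_zero : vn 0 = ∅ := by
  apply (ZFSet.eq_empty _).2
  intro z hz
  rcases mem_vn.1 hz with ⟨ξ, hξ, -⟩
  exact absurd hξ (not_lt_zero (a := ξ))

theorem vn_succ (o : Ordinal.{0}) : vn (o + 1) = insert (vn o) (vn o) := by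
  apply ZFSet.ext
  intro z
  rw [mem_vn, ZFSet.mem_insert_iff]
  constructor
  · rintro ⟨ξ, hξ, rfl⟩
    have : ξ ≤ o := by
      rw [Ordinal.add_one_eq_succ] at hξ
      exact Order.lt_succ_iff.1 hξ
    rcases this.lt_or_eq with h | h
    · exact Or.inr (vn_mem_vn h)
    · exact Or.inl (by rw [h])
  · rintro (rfl | hz)
    · exact ⟨o, by rw [Ordinal.add_one_eq_succ]; exact Order.lt_succ o, rfl⟩
    · rcases mem_vn.1 hz with ⟨ξ, hξ, rfl⟩
      exact ⟨ξ, hξ.trans (by rw [Ordinal.add_one_eq_succ]; exact Order.lt_succ o), rfl⟩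

theorem mk_psetInsert (x y : PSet.{0}) :
    ZFSet.mk (insert x y) = insert (ZFSet.mk x) (ZFSet.mk y) := by
  apply ZFSet.ext
  intro z
  refine Quotient.inductionOn z (fun zp => ?_)
  rw [show (⟦zp⟧ : ZFSet) = ZFSet.mk zp from rfl, ZFSet.mk_mem_iff, ZFSet.mem_insert_iff,
    PSet.mem_insert_iff]
  exact or_congr ⟨fun h => ZFSet.sound h, fun h => ZFSet.exact h⟩ ZFSet.mk_mem_iff.symm

theorem mk_ofNat_eq_vn : ∀ n : ℕ, ZFSet.mk (PSet.ofNat n) = vn n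
  | 0 => by
    rw [show ((0 : ℕ) : Ordinal.{0}) = 0 by simp, vn_zero]
    apply (ZFSet.eq_empty _).2
    intro z hz
    revert hz
    refine Quotient.inductionOn z (fun zp hz => ?_)
    exact PSet.notMem_empty zp hz
  | n + 1 => by
    rw [show PSet.ofNat (n + 1) = insert (PSet.ofNat n) (PSet.ofNat n) from rfl,
      mk_psetInsert, mk_ofNat_eq_vn n,
      show ((n + 1 : ℕ) : Ordinal.{0}) = (n : Ordinal.{0}) + 1 by push_cast; rfl,
      vn_succ]

theorem omega_eq_vn : ZFSet.omega = vn Ordinal.omega0 := by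
  apply ZFSet.ext
  intro z
  constructor
  · intro hz
    revert hz
    refine Quotient.inductionOn z (fun zp hz => ?_)
    rcases hz with ⟨⟨n⟩, he⟩
    have : ZFSet.mk zp = ZFSet.mk (PSet.ofNat n) := ZFSet.sound he
    rw [show (⟦zp⟧ : ZFSet) = ZFSet.mk zp from rfl, this, mk_ofNat_eq_vn n]
    exact vn_mem_vn (Ordinal.nat_lt_omega0 n)
  · intro hz
    rcases mem_vn.1 hz with ⟨ξ, hξ, rfl⟩
    rcases Ordinal.lt_omega0.1 hξ with ⟨n, rfl⟩
    rw [← mk_ofNat_eq_vn n]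
    exact ⟨⟨n⟩, PSet.Equiv.rfl⟩

open Cardinal in
/-- small cardinal bound for the toSet of a ZFSet -/
noncomputable def sB (x : ZFSet.{0}) : Cardinal.{0} := #(Shrink.{0} x.toSet)

open Cardinal in
theorem mk_toSet_eq_sB (x : ZFSet.{0}) : #x.toSet = Cardinal.lift.{1} (sB x) := by
  have := Cardinal.lift_mk_shrink'.{1, 0} x.toSet
  rw [Cardinal.lift_uzero] at this
  exact this.symm

open Cardinal in
theorem cardLt_vn_of_lt {x : ZFSet.{0}} {κ : Cardinal.{0}} (h : sB x < κ) :
    CardLt x (vn κ.ord) := by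
  refine ⟨vn (sB x).ord, (ZFSet.mem_toSet _ _).2 (vn_mem_vn (Cardinal.ord_lt_ord.2 h)), ?_⟩
  have e1 : #x.toSet = #(vn (sB x).ord).toSet := by
    rw [mk_toSet_vn, Cardinal.card_ord, mk_toSet_eq_sB]
  obtain ⟨e⟩ := Cardinal.eq.1 e1
  exact ⟨e, e.injective⟩

/-- iterated union levels -/
noncomputable def lev (x : ZFSet.{0}) : ℕ → ZFSet.{0} := fun n => ZFSet.sUnion^[n] x

theorem lev_zero (x : ZFSet.{0}) : lev x 0 = x := rfl

theorem lev_succ (x : ZFSet.{0}) (n : ℕ) : lev x (n + 1) = ZFSet.sUnion (lev x n) := by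
  unfold lev
  rw [Function.iterate_succ_apply']

theorem mem_lev_succ_of_mem {x y z : ZFSet.{0}} {n : ℕ} (hy : y ∈ lev x n) (hz : z ∈ y) :
    z ∈ lev x (n + 1) := by
  rw [lev_succ]
  exact ZFSet.mem_sUnion.2 ⟨y, hy, hz⟩

theorem inTC_lev {x y : ZFSet.{0}} (h : InTC y x) : ∃ n, y ∈ lev x n := by
  obtain ⟨n, c, h0, hchain, hlast⟩ := h
  have key : ∀ k : Fin (n + 1), c k ∈ lev x k.1 := by
    intro k
    induction k using Fin.induction with
    | zero => exact h0
    | succ i ih =>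
      have : c i.succ ∈ c i.castSucc := hchain i
      have h2 : c i.castSucc ∈ lev x i.1 := by simpa using ih
      simpa using mem_lev_succ_of_mem h2 this
  exact ⟨n, by rw [← hlast]; simpa using key (Fin.last n)⟩

theorem sB_le_of_subset {x y : ZFSet.{0}} (h : x.toSet ⊆ y.toSet) : sB x ≤ sB y := by
  have := Cardinal.mk_le_mk_of_subset h
  rw [mk_toSet_eq_sB, mk_toSet_eq_sB] at this
  exact Cardinal.lift_le.1 this

theorem toSet_subset_lev_succ {x y : ZFSet.{0}} {n : ℕ} (hy : y ∈ lev x n) :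
    y.toSet ⊆ (lev x (n + 1)).toSet := by
  intro z hz
  exact (ZFSet.mem_toSet _ _).2 (mem_lev_succ_of_mem hy ((ZFSet.mem_toSet _ _).1 hz))

open Cardinal in
theorem mem_HClass_of_levBound {x : ZFSet.{0}} {κ : Cardinal.{0}}
    (h : ∀ n, sB (lev x n) < κ) : x ∈ HClass (vn κ.ord) := by
  constructor
  · exact cardLt_vn_of_lt (by simpa [lev_zero] using h 0)
  · intro y hy
    obtain ⟨n, hn⟩ := inTC_lev hy
    exact cardLt_vn_of_lt (lt_of_le_of_lt (sB_le_of_subset (toSet_subset_lev_succ hn)) (h (n + 1)))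

theorem HClass_trans {θ x y : ZFSet.{0}} (hx : x ∈ HClass θ) (hy : y ∈ x) : y ∈ HClass θ := by
  obtain ⟨hc, htc⟩ := hx
  constructor
  · exact htc y ⟨0, fun _ => y, hy, fun i => i.elim0, rfl⟩
  · intro z hz
    obtain ⟨n, c, h0, hchain, hlast⟩ := hz
    refine htc z ⟨n + 1, Fin.cons y c, hy, ?_, ?_⟩
    · intro i
      induction i using Fin.cases with
      | zero => simpa using h0
      | succ j =>
        have e1 : (Fin.cons y c : Fin (n + 2) → ZFSet.{0}) j.succ.succ = c j.succ :=
          Fin.cons_succ _ _ _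
        have e2 : (Fin.cons y c : Fin (n + 2) → ZFSet.{0}) j.succ.castSucc = c j.castSucc := by
          rw [← Fin.succ_castSucc]
          exact Fin.cons_succ _ _ _
        rw [e1, e2]
        exact hchain j
    · have : Fin.last (n + 1) = (Fin.last n).succ := by
        ext
        simp
      rw [this]
      simpa [Fin.cons_succ] using hlast

open Cardinal in
theorem isRegular_vn {κ : Cardinal.{0}} (hκ : ℵ₀ < κ) (hreg : κ.IsRegular) :
    IsRegular (vn κ.ord) := by
  refine ⟨⟨vn_isTransitive _, fun y hy => ?_⟩, ?_, ?_, ?_⟩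
  · rcases mem_vn.1 hy with ⟨ξ, -, rfl⟩
    exact vn_isTransitive ξ
  · rw [omega_eq_vn]
    exact vn_mem_vn (by rw [← Cardinal.ord_aleph0]; exact Cardinal.ord_lt_ord.2 hκ)
  · intro hc
    have h1 : #(vn κ.ord).toSet ≤ ℵ₀ := Cardinal.mk_le_aleph0_iff.2 (Set.countable_coe_iff.2 hc)
    rw [mk_toSet_vn, Cardinal.card_ord, ← Cardinal.lift_aleph0.{1,0}] at h1
    exact absurd (Cardinal.lift_le.1 h1) (not_le.2 hκ)
  · intro β hβ f hf
    rcases mem_vn.1 ((ZFSet.mem_toSet _ _).1 hβ) with ⟨ξ, hξ, rfl⟩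
    have hval : ∀ i : ξ.ToType, ∃ η, η < κ.ord ∧ f (vn (tyo ξ i)) = vn η := by
      intro i
      have : f (vn (tyo ξ i)) ∈ vn κ.ord :=
        hf _ ((ZFSet.mem_toSet _ _).2 (vn_mem_vn (tyo_lt i)))
      simpa using mem_vn.1 this
    choose g hg1 hg2 using hval
    have hcard : #ξ.ToType < κ.ord.cof := by
      rw [hreg.cof_eq, Cardinal.mk_toType]
      exact Cardinal.lt_ord.1 hξ
    have hlsub : Ordinal.lsub g < κ.ord := Ordinal.lsub_lt_ord hcard hg1
    refine ⟨vn (Ordinal.lsub g), (ZFSet.mem_toSet _ _).2 (vn_mem_vn hlsub), ?_⟩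
    intro x hx
    rcases mem_vn.1 ((ZFSet.mem_toSet _ _).1 hx) with ⟨ζ, hζ, rfl⟩
    obtain ⟨i, rfl⟩ := tyo_surj hζ
    rw [hg2 i]
    exact vn_mem_vn (Ordinal.lt_lsub g i)

open Cardinal in
theorem exists_good_theta (x : ZFSet.{0}) :
    ∃ θ : ZFSet.{0}, IsRegular θ ∧ x ∈ HClass θ := by
  classical
  set s : Cardinal.{0} := ℵ₀ ⊔ (⨆ n : ℕ, sB (lev x n)) with hs
  set κ := Order.succ s with hκdef
  have hℵ : ℵ₀ ≤ s := le_sup_left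
  have hκℵ : ℵ₀ < κ := lt_of_le_of_lt hℵ (Order.lt_succ s)
  have hreg : κ.IsRegular := Cardinal.isRegular_succ hℵ
  refine ⟨vn κ.ord, isRegular_vn hκℵ hreg, mem_HClass_of_levBound ?_⟩
  intro n
  calc sB (lev x n) ≤ ⨆ n : ℕ, sB (lev x n) :=
        le_ciSup (Cardinal.bddAbove_range _) n
    _ ≤ s := le_sup_right
    _ < κ := Order.lt_succ s

/-! #### graphs of choice functions as ZF sets -/

noncomputable def graph (f : ZFSet.{0} → ZFSet.{0}) (D : ZFSet.{0}) : ZFSet.{0} :=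
  @ZFSet.image (fun q => ZFSet.pair q (f q)) (Classical.allZFSetDefinable _) D

theorem mem_graph {f : ZFSet.{0} → ZFSet.{0}} {D z : ZFSet.{0}} :
    z ∈ graph f D ↔ ∃ q ∈ D, z = ZFSet.pair q (f q) := by
  unfold graph
  rw [@ZFSet.mem_image _ (Classical.allZFSetDefinable _)]
  constructor
  · rintro ⟨q, hq, rfl⟩
    exact ⟨q, hq, rfl⟩
  · rintro ⟨q, hq, rfl⟩
    exact ⟨q, hq, rfl⟩

theorem pair_mem_graph {f : ZFSet.{0} → ZFSet.{0}} {D a b : ZFSet.{0}} :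
    ZFSet.pair a b ∈ graph f D ↔ a ∈ D ∧ b = f a := by
  rw [mem_graph]
  constructor
  · rintro ⟨q, hq, he⟩
    obtain ⟨rfl, rfl⟩ := ZFSet.pair_injective he
    exact ⟨hq, rfl⟩
  · rintro ⟨ha, rfl⟩
    exact ⟨a, ha, rfl⟩

theorem isFun_graph (f : ZFSet.{0} → ZFSet.{0}) (D : ZFSet.{0}) : IsFun (graph f D) := by
  constructor
  · intro z hz
    rcases mem_graph.1 hz with ⟨q, hq, rfl⟩
    exact ⟨q, f q, rfl⟩
  · intro a b b' hb hb'
    obtain ⟨-, rfl⟩ := pair_mem_graph.1 hb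
    obtain ⟨-, rfl⟩ := pair_mem_graph.1 hb'
    rfl

/-! #### splitting data choosers -/

/-- splitting data: two extensions of `q` deciding `F` at `β` incompatibly -/
def SpData (ω1 P le F q β u u' x x' : ZFSet.{0}) : Prop :=
  β ∈ ω1.toSet ∧ u ∈ P ∧ u' ∈ P ∧ pLe le u q ∧ pLe le u' q ∧
    ZFSet.pair u (ZFSet.pair β x) ∈ F ∧ ZFSet.pair u' (ZFSet.pair β x') ∈ F ∧ x ≠ x'

def Sp (ω1 P le F q : ZFSet.{0}) : Prop :=
  ∃ β u u' x x', SpData ω1 P le F q β u u' x x'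

open Classical in
noncomputable def vB (ω1 P le F : ZFSet.{0}) (q : ZFSet.{0}) : ZFSet.{0} :=
  if h : Sp ω1 P le F q then h.choose else ∅

open Classical in
noncomputable def vU (ω1 P le F : ZFSet.{0}) (q : ZFSet.{0}) : ZFSet.{0} :=
  if h : Sp ω1 P le F q then h.choose_spec.choose else ∅

open Classical in
noncomputable def vU' (ω1 P le F : ZFSet.{0}) (q : ZFSet.{0}) : ZFSet.{0} :=
  if h : Sp ω1 P le F q then h.choose_spec.choose_spec.choose else ∅

open Classical in
noncomputable def vx (ω1 P le F : ZFSet.{0}) (q : ZFSet.{0}) : ZFSet.{0} :=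
  if h : Sp ω1 P le F q then h.choose_spec.choose_spec.choose_spec.choose else ∅

open Classical in
noncomputable def vx' (ω1 P le F : ZFSet.{0}) (q : ZFSet.{0}) : ZFSet.{0} :=
  if h : Sp ω1 P le F q then h.choose_spec.choose_spec.choose_spec.choose_spec.choose else ∅

theorem v_spec {ω1 P le F q : ZFSet.{0}} (h : Sp ω1 P le F q) :
    SpData ω1 P le F q (vB ω1 P le F q) (vU ω1 P le F q) (vU' ω1 P le F q)
      (vx ω1 P le F q) (vx' ω1 P le F q) := by
  rw [vB, vU, vU', vx, vx', dif_pos h, dif_pos h, dif_pos h, dif_pos h, dif_pos h]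
  exact h.choose_spec.choose_spec.choose_spec.choose_spec.choose_spec

end Aux


/-! #### more helpers for the main argument -/

open Classical in
noncomputable def xvf (P le F q : ZFSet.{0}) : ZFSet.{0} → ZFSet.{0} := fun β =>
  if h : ∃ r x, r ∈ P ∧ pLe le r q ∧ ZFSet.pair r (ZFSet.pair β x) ∈ F then
    h.choose_spec.choose else ∅

theorem xvf_spec {P le F q β : ZFSet.{0}}
    (h : ∃ r x, r ∈ P ∧ pLe le r q ∧ ZFSet.pair r (ZFSet.pair β x) ∈ F) :
    ∃ r, r ∈ P ∧ pLe le r q ∧ ZFSet.pair r (ZFSet.pair β (xvf P le F q β)) ∈ F := by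
  rw [xvf, dif_pos h]
  exact ⟨h.choose, h.choose_spec.choose_spec⟩

noncomputable def pickF (a b c d e : ZFSet.{0}) : List ZFSet.{0} → ZFSet.{0} := fun l =>
  match l.length with
  | 0 => a
  | 1 => b
  | 2 => c
  | 3 => d
  | 4 => e
  | _ => ∅

theorem pickF_cases (a b c d e : ZFSet.{0}) (l : List ZFSet.{0}) :
    pickF a b c d e l = a ∨ pickF a b c d e l = b ∨ pickF a b c d e l = c ∨
      pickF a b c d e l = d ∨ pickF a b c d e l = e ∨ pickF a b c d e l = ∅ := by
  unfold pickF
  rcases l.length with _ | _ | _ | _ | _ | n <;> simp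

theorem stat_self {ω1 : ZFSet.{0}} (h : IsOmega1 ω1) : Stat ω1 ω1 := by
  refine ⟨fun z hz => hz, ?_⟩
  intro C _ hC
  have hne : ω1.toSet.Nonempty :=
    Set.nonempty_iff_ne_empty.2 (fun he => h.2.1 (he ▸ Set.countable_empty))
  obtain ⟨α, hα⟩ := hne
  obtain ⟨βc, hβC, -⟩ := hC.2.1 α hα
  exact ⟨βc, hC.1 hβC, hβC⟩

/-- a strongly ssp forcing adds no fresh function `ω₁ → V`: any name all
of whose initial segments are forced into `V` is (densely) decided to equal a
ground-model function. -/
theorem no_fresh_function_of_stronglySSP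
    (ω1 P le : ZFSet.{0}) (hω1 : IsOmega1 ω1) (hF : IsForcing P le)
    (h : StronglySSP ω1 P le) :
    ∀ F : ZFSet.{0}, FnName ω1 P le F → ∀ p ∈ P.toSet, RestrInV ω1 P le F p →
      ∃ q g, q ∈ P ∧ pLe le q p ∧ IsFun g ∧ (∀ y, domMem g y ↔ y ∈ ω1) ∧
        ∀ α x : ZFSet.{0}, ZFSet.pair α x ∈ g → ForcesVal P le F q α x := by
  intro F hFn p hpP hrv
  by_contra hnc
  have hppP : p ∈ P := (ZFSet.mem_toSet _ _).1 hpP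
  have htr := hF.2.2
  have hrefl := hF.2.1
  -- Step 1: splitting below any q ≤ p
  have step1 : ∀ q, q ∈ P.toSet → pLe le q p → Sp ω1 P le F q := by
    intro q hq hqp
    by_contra hs
    have wd : ∀ β u u' x x', β ∈ ω1.toSet → u ∈ P → u' ∈ P → pLe le u q → pLe le u' q →
        ZFSet.pair u (ZFSet.pair β x) ∈ F → ZFSet.pair u' (ZFSet.pair β x') ∈ F → x = x' := by
      intro β u u' x x' h1 h2 h3 h4 h5 h6 h7
      by_contra hne
      exact hs ⟨β, u, u', x, x', h1, h2, h3, h4, h5, h6, h7, hne⟩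
    apply hnc
    refine ⟨q, graph (xvf P le F q) ω1, (ZFSet.mem_toSet _ _).1 hq, hqp, isFun_graph _ _, ?_, ?_⟩
    · intro y
      constructor
      · rintro ⟨b, hb⟩
        exact (pair_mem_graph.1 hb).1
      · intro hy
        exact ⟨xvf P le F q y, pair_mem_graph.2 ⟨hy, rfl⟩⟩
    · intro α x hmemg
      obtain ⟨hα, rfl⟩ := pair_mem_graph.1 hmemg
      have hαs : α ∈ ω1.toSet := (ZFSet.mem_toSet _ _).2 hα
      obtain ⟨rα, hrαP, hrαq, hrαF⟩ := xvf_spec (hFn.2.1 q hq α hαs)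
      intro s hsP hsq
      obtain ⟨s', x'', hs'P, hs'le, hs'F⟩ := hFn.2.1 s ((ZFSet.mem_toSet _ _).2 hsP) α hαs
      have hx : x'' = xvf P le F q α :=
        wd α s' rα x'' _ hαs hs'P hrαP (htr s' s q hs'le hsq) hrαq hs'F hrαF
      exact ⟨s', hs'P, hs'le, by rw [← hx]; exact hs'F⟩
  -- Step 2: splitting below any q compatible with p
  have step2 : ∀ q, q ∈ P.toSet → CompatC P le q p → Sp ω1 P le F q := by
    rintro q hq ⟨w, hwP, hwq, hwp⟩
    obtain ⟨β, u, u', x, x', hβ, huP, hu'P, huw, hu'w, huF, hu'F, hxx⟩ :=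
      step1 w ((ZFSet.mem_toSet _ _).2 hwP) hwp
    exact ⟨β, u, u', x, x', hβ, huP, hu'P, htr u w q huw hwq, htr u' w q hu'w hwq,
      huF, hu'F, hxx⟩
  -- the ZF-set choice functions
  have hchB : ∀ q ∈ P, ZFSet.pair q (vB ω1 P le F q) ∈ graph (vB ω1 P le F) P :=
    fun q hq => pair_mem_graph.2 ⟨hq, rfl⟩
  -- choose a large regular θ
  obtain ⟨θ, hreg, hboxH⟩ := exists_good_theta
    ({ZFSet.powerset (ZFSet.powerset (ZFSet.pair P le)), graph (vB ω1 P le F) P,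
      graph (vU ω1 P le F) P, graph (vU' ω1 P le F) P, graph (fun z => z) P, p, ∅} : ZFSet.{0})
  have hboxmem : ∀ y : ZFSet.{0},
      (y = ZFSet.powerset (ZFSet.powerset (ZFSet.pair P le)) ∨ y = graph (vB ω1 P le F) P ∨
        y = graph (vU ω1 P le F) P ∨ y = graph (vU' ω1 P le F) P ∨
        y = graph (fun z => z) P ∨ y = p ∨ y = ∅) → y ∈ HClass θ := by
    intro y hy
    refine HClass_trans hboxH ?_
    simp only [ZFSet.mem_insert_iff, ZFSet.mem_singleton]
    tauto
  have hGg : Gg (ZFSet.pair P le) θ := hboxmem _ (Or.inl rfl)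
  have hproj := h θ hreg hGg ω1 (stat_self hω1)
  obtain ⟨M, hMY, -, -, hMcl⟩ := hproj
    (pickF p (graph (fun z => z) P) (graph (vU ω1 P le F) P) (graph (vU' ω1 P le F) P)
      (graph (vB ω1 P le F) P))
    (by
      intro l
      rcases pickF_cases p (graph (fun z => z) P) (graph (vU ω1 P le F) P)
        (graph (vU' ω1 P le F) P) (graph (vB ω1 P le F) P) l with h1 | h1 | h1 | h1 | h1 | h1 <;>
        rw [h1] <;> exact hboxmem _ (by tauto))
  obtain ⟨⟨-, -, hssp⟩, δ, hδ, hδω⟩ := hMY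
  -- the seeds belong to M
  have hpM : p ∈ M := hMcl [] (by intro x hx; simp at hx)
  have hidM : graph (fun z => z) P ∈ M := by
    have := hMcl [p] (by intro x hx; simp at hx; rw [hx]; exact hpM)
    exact this
  have hchUM : graph (vU ω1 P le F) P ∈ M := by
    have := hMcl [p, p] (by intro x hx; simp at hx; rw [hx]; exact hpM)
    exact this
  have hchU'M : graph (vU' ω1 P le F) P ∈ M := by
    have := hMcl [p, p, p] (by intro x hx; simp at hx; rw [hx]; exact hpM)
    exact this
  have hchBM : graph (vB ω1 P le F) P ∈ M := by
    have := hMcl [p, p, p, p] (by intro x hx; simp at hx; rw [hx]; exact hpM)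
    exact this
  -- strongly semigeneric condition below p
  obtain ⟨p', hp'P, hp'le, hsg⟩ := hssp p hppP hpM
  have hδs : δ ∈ ω1.toSet := (ZFSet.mem_toSet _ _).2 hδω
  obtain ⟨r, g₀, hrP, hrp', hg₀fun, hg₀dom, hg₀forces⟩ := hrv p' hp'P hp'le δ hδs
  obtain ⟨t, htP, htpar, htrace⟩ := hsg r hrP hrp'
  have htPs : t ∈ P.toSet := (ZFSet.mem_toSet _ _).2 htP
  have htHull : t ∈ Hull M t :=
    ⟨graph (fun z => z) P, hidM, isFun_graph _ _, pair_mem_graph.2 ⟨htP, rfl⟩⟩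
  obtain ⟨v, hvP, hvt, hvr⟩ := htrace t htHull htP (hrefl t htPs)
  have htp : CompatC P le t p := ⟨v, hvP, hvt, htr v r p hvr (htr r p' p hrp' hp'le)⟩
  have hSp : Sp ω1 P le F t := step2 t htPs htp
  obtain ⟨hβω, huP, hu'P, hut, hu't, huF, hu'F, hne⟩ := v_spec hSp
  have hβHull : vB ω1 P le F t ∈ Hull M t :=
    ⟨graph (vB ω1 P le F) P, hchBM, isFun_graph _ _, pair_mem_graph.2 ⟨htP, rfl⟩⟩
  have hβM : vB ω1 P le F t ∈ M := (htpar _ hβω).1 hβHull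
  have hβδ : vB ω1 P le F t ∈ δ := (hδ.2 _).2 ⟨hβω, hβM⟩
  obtain ⟨y, hyg₀⟩ : domMem g₀ (vB ω1 P le F t) := (hg₀dom _).2 hβδ
  have hyforce : ForcesVal P le F r (vB ω1 P le F t) y := hg₀forces _ _ hyg₀
  have hval : ∀ u xx, u ∈ P → pLe le u t →
      ZFSet.pair u (ZFSet.pair (vB ω1 P le F t) xx) ∈ F → u ∈ Hull M t → xx = y := by
    intro u xx huP2 hule huF2 huHull
    obtain ⟨w, hwP, hwu, hwr⟩ := htrace u huHull huP2 hule
    obtain ⟨s', hs'P, hs'w, hs'F⟩ := hyforce w hwP hwr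
    exact hFn.2.2 u _ xx s' y huF2 hs'F
      ⟨s', hs'P, htr s' w u hs'w hwu, hrefl s' ((ZFSet.mem_toSet _ _).2 hs'P)⟩
  have h1 : vx ω1 P le F t = y :=
    hval _ _ huP hut huF
      ⟨graph (vU ω1 P le F) P, hchUM, isFun_graph _ _, pair_mem_graph.2 ⟨htP, rfl⟩⟩
  have h2 : vx' ω1 P le F t = y :=
    hval _ _ hu'P hu't hu'F
      ⟨graph (vU' ω1 P le F) P, hchU'M, isFun_graph _ _, pair_mem_graph.2 ⟨htP, rfl⟩⟩
  exact hne (h1.trans h2.symm)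

end CcPaper
end
end
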